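/- arXiv:2309.07246 — 5 statements merged into one kernel-verified Lean document; each statement's English description precedes it below -/
import Mathlib

section
/- Let c, d be positive integers, I = ℕ^d × [c], and identify I ⊔ I with ℕ^d × [2c], so that Sym acts on ℤ^(I ⊔ I) ≅ ℤ^(I) ⊕ ℤ^(I) diagonally and the map φ : ℤ^(I) ⊕ ℤ^(I) → ℤ^(I), φ(u, v) = u − v, is Sym-equivariant. Let L ⊆ ℤ^(I) be a Sym-invariant lattice and M = φ^{-1}(L) ∩ (ℤ_{≥0}^(I) ⊕ ℤ_{≥0}^(I)). Then M has a finite equivariant Hilbert basis if and only if L has a finite equivariant Graver basis. -/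
open Finsupp

/-- A permutation of `ℕ` that moves only finitely many points:
an element of the infinite symmetric group `Sym`. -/
def IsFinPerm (σ : Equiv.Perm ℕ) : Prop := {i | σ i ≠ i}.Finite

/-- Membership in `Sym(n)`: permutations of `ℕ` fixing every index `≥ n`
(the indices `0, 1, …, n-1` play the role of `[n] = {1, …, n}`). -/
def InSymN (n : ℕ) (σ : Equiv.Perm ℕ) : Prop := ∀ i, n ≤ i → σ i = i

/-- `u ∈ ℤ_{≥0}^{(I)}`. -/
def FsNonneg {I : Type*} (u : I →₀ ℤ) : Prop := ∀ i, 0 ≤ u i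

/-- The partial order `⊑`. -/
def Sqle {I : Type*} (u v : I →₀ ℤ) : Prop := ∀ i, 0 ≤ u i * v i ∧ |u i| ≤ |v i|

/-- The Graver basis of (the underlying set of) a lattice `L`:
the `⊑`-minimal elements of `L \ {0}`. -/
def GraverBasis {I : Type*} (L : Set (I →₀ ℤ)) : Set (I →₀ ℤ) :=
  {u | u ∈ L ∧ u ≠ 0 ∧ ∀ v ∈ L, v ≠ 0 → Sqle v u → v = u}

/-- The `L`-fiber of `u`. -/
def latFiber {I : Type*} (L : Set (I →₀ ℤ)) (u : I →₀ ℤ) : Set (I →₀ ℤ) :=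
  {v | FsNonneg v ∧ u - v ∈ L}

/-- `B` is a Markov basis of `L`: for each nonnegative `u` the graph on the fiber
`F_L(u)` with edges `v ~ w` whenever `v - w ∈ B ∪ (-B)` is connected. -/
def IsMarkovBasis {I : Type*} (L B : Set (I →₀ ℤ)) : Prop :=
  ∀ u, FsNonneg u → ∀ v ∈ latFiber L u, ∀ w ∈ latFiber L u,
    Relation.ReflTransGen
      (fun x y => x ∈ latFiber L u ∧ y ∈ latFiber L u ∧ (x - y ∈ B ∨ y - x ∈ B)) v w

/-- A term order on `ℤ_{≥0}^{(I)}`: an additive well-order on the nonnegative elements. -/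
structure TermOrderZ (I : Type*) where
  lt : (I →₀ ℤ) → (I →₀ ℤ) → Prop
  irrefl : ∀ u, FsNonneg u → ¬ lt u u
  trans : ∀ u v w, FsNonneg u → FsNonneg v → FsNonneg w → lt u v → lt v w → lt u w
  total : ∀ u v, FsNonneg u → FsNonneg v → u ≠ v → lt u v ∨ lt v u
  min_exists : ∀ S : Set (I →₀ ℤ), (∀ u ∈ S, FsNonneg u) → S.Nonempty →
    ∃ m ∈ S, ∀ u ∈ S, u ≠ m → ¬ lt u m
  add_right : ∀ u v w, FsNonneg u → FsNonneg v → FsNonneg w → lt u v → lt (u + w) (v + w)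

/-- There is a directed path (w.r.t. `lt`, with moves from `B ∪ (-B)`) inside the fiber
of `u` from `u` to the `lt`-minimal element of the fiber. -/
def GroebnerPath {I : Type*} (L : Set (I →₀ ℤ)) (lt : (I →₀ ℤ) → (I →₀ ℤ) → Prop)
    (B : Set (I →₀ ℤ)) (u : I →₀ ℤ) : Prop :=
  ∃ (s : ℕ) (v : ℕ → (I →₀ ℤ)), v 0 = u ∧ (∀ t ≤ s, v t ∈ latFiber L u) ∧
    (∀ t < s, lt (v (t + 1)) (v t) ∧ (v t - v (t + 1) ∈ B ∨ v (t + 1) - v t ∈ B)) ∧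
    (∀ w ∈ latFiber L u, w ≠ v s → lt (v s) w)

/-- `B` is a Gröbner basis of `L` with respect to the term order `lt`. -/
def IsGroebnerBasis {I : Type*} (L : Set (I →₀ ℤ))
    (lt : (I →₀ ℤ) → (I →₀ ℤ) → Prop) (B : Set (I →₀ ℤ)) : Prop :=
  ∀ u, FsNonneg u → GroebnerPath L lt B u

/-- `H` is a Hilbert basis of the (set underlying a) monoid `M`:
a generating set of `M` contained in every generating set of `M`. -/
def IsHilbertBasis {N : Type*} [AddCommMonoid N] (M H : Set N) : Prop :=
  H ⊆ M ∧ (AddSubmonoid.closure H : Set N) = M ∧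
    ∀ A ⊆ M, (AddSubmonoid.closure A : Set N) = M → H ⊆ A

/-- `u` is an irreducible element of `M`. -/
def IsIrredElem {N : Type*} [AddCommMonoid N] (M : Set N) (u : N) : Prop :=
  u ∈ M ∧ u ≠ 0 ∧ ∀ v ∈ M, ∀ w ∈ M, u = v + w → v = 0 ∨ w = 0

/-- The action of a permutation of `ℕ` on `ℤ^{(ℕ^d × [c])}`:
`(σ·u)((σ i₁, …, σ i_d), j) = u((i₁, …, i_d), j)`. -/
noncomputable def permActd (d c : ℕ) (σ : Equiv.Perm ℕ) (u : (Fin d → ℕ) × Fin c →₀ ℤ) :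
    (Fin d → ℕ) × Fin c →₀ ℤ :=
  Finsupp.equivMapDomain
    (Equiv.prodCongr ((Equiv.refl (Fin d)).arrowCongr σ) (Equiv.refl (Fin c))) u

/-- The action of a permutation of `ℕ` on `ℤ^{(ℕ × [c])}`: `(σ·u)(σ i, j) = u(i, j)`. -/
noncomputable def permAct1 (c : ℕ) (σ : Equiv.Perm ℕ) (u : ℕ × Fin c →₀ ℤ) :
    ℕ × Fin c →₀ ℤ :=
  Finsupp.equivMapDomain (Equiv.prodCongr σ (Equiv.refl (Fin c))) u

/-- The action of a permutation of `ℕ` on `ℤ^{(ℕ)}`: `(σ·u)(σ i) = u i`. -/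
noncomputable def permAct0 (σ : Equiv.Perm ℕ) (u : ℕ →₀ ℤ) : ℕ →₀ ℤ :=
  Finsupp.equivMapDomain σ u

/-- `Sym(B)` for `B ⊆ ℤ^{(ℕ^d × [c])}`. -/
def symOrbitd (d c : ℕ) (B : Set ((Fin d → ℕ) × Fin c →₀ ℤ)) :
    Set ((Fin d → ℕ) × Fin c →₀ ℤ) :=
  {w | ∃ σ, IsFinPerm σ ∧ ∃ b ∈ B, w = permActd d c σ b}

/-- `Sym(n)(B)` for `B ⊆ ℤ^{(ℕ^d × [c])}`. -/
def symOrbitNd (d c n : ℕ) (B : Set ((Fin d → ℕ) × Fin c →₀ ℤ)) :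
    Set ((Fin d → ℕ) × Fin c →₀ ℤ) :=
  {w | ∃ σ, InSymN n σ ∧ ∃ b ∈ B, w = permActd d c σ b}

/-- `Sym(B)` for `B ⊆ ℤ^{(ℕ × [c])}`. -/
def symOrbit1 (c : ℕ) (B : Set (ℕ × Fin c →₀ ℤ)) : Set (ℕ × Fin c →₀ ℤ) :=
  {w | ∃ σ, IsFinPerm σ ∧ ∃ b ∈ B, w = permAct1 c σ b}

/-- `Sym(B)` for `B ⊆ ℤ^{(ℕ)}`. -/
def symOrbit0 (B : Set (ℕ →₀ ℤ)) : Set (ℕ →₀ ℤ) :=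
  {w | ∃ σ, IsFinPerm σ ∧ ∃ b ∈ B, w = permAct0 σ b}

/-- `supp(u) ⊆ I_n = [n]^d × [c]`. -/
def SuppIn (d c n : ℕ) (u : (Fin d → ℕ) × Fin c →₀ ℤ) : Prop :=
  ∀ p : (Fin d → ℕ) × Fin c, u p ≠ 0 → ∀ k, p.1 k < n

/-- `ℤ^{(I_n)}`, for `I_n = [n]^d × [c]`, as a subgroup of `ℤ^{(ℕ^d × [c])}`. -/
noncomputable def suppSubgroup (d c n : ℕ) : AddSubgroup ((Fin d → ℕ) × Fin c →₀ ℤ) where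
  carrier := {u | SuppIn d c n u}
  zero_mem' := by intro p hp; simp at hp
  add_mem' := by
    intro a b ha hb p hp k
    by_cases h : a p = 0
    · refine hb p ?_ k
      intro hbp
      exact hp (by simp [h, hbp])
    · exact ha p h k
  neg_mem' := by
    intro a ha p hp k
    refine ha p ?_ k
    intro hap
    exact hp (by simp [hap])

/-- The positive part `u⁺`. -/
noncomputable def fsPos {I : Type*} (u : I →₀ ℤ) : I →₀ ℤ :=
  u.mapRange (fun z => max z 0) (by simp)

/-- The negative part `u⁻`. -/
noncomputable def fsNeg {I : Type*} (u : I →₀ ℤ) : I →₀ ℤ :=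
  u.mapRange (fun z => max (-z) 0) (by simp)

section AuxBasic

open Finsupp Equiv

/-! ### Pointwise integer lemmas -/

private lemma pt_of_sqle {a b : ℤ} (h1 : 0 ≤ a * b) (h2 : |a| ≤ |b|) :
    (0 ≤ a ∧ a ≤ b) ∨ (a ≤ 0 ∧ b ≤ a) := by
  rcases mul_nonneg_iff.mp h1 with ⟨ha, hb⟩ | ⟨ha, hb⟩
  · left; rw [abs_of_nonneg ha, abs_of_nonneg hb] at h2; exact ⟨ha, h2⟩
  · right; rw [abs_of_nonpos ha, abs_of_nonpos hb] at h2; exact ⟨ha, by omega⟩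

private lemma pt_to_sqle {a b : ℤ} (h : (0 ≤ a ∧ a ≤ b) ∨ (a ≤ 0 ∧ b ≤ a)) :
    0 ≤ a * b ∧ |a| ≤ |b| := by
  rcases h with ⟨h1, h2⟩ | ⟨h1, h2⟩
  · exact ⟨mul_nonneg h1 (h1.trans h2),
      by rw [abs_of_nonneg h1, abs_of_nonneg (h1.trans h2)]; exact h2⟩
  · exact ⟨mul_nonneg_iff.mpr (Or.inr ⟨h1, h2.trans h1⟩),
      by rw [abs_of_nonpos h1, abs_of_nonpos (h2.trans h1)]; omega⟩

/-! ### `fsPos` / `fsNeg` -/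

lemma fsPos_apply {I : Type*} (u : I →₀ ℤ) (p : I) : fsPos u p = max (u p) 0 :=
  Finsupp.mapRange_apply

lemma fsNeg_apply {I : Type*} (u : I →₀ ℤ) (p : I) : fsNeg u p = max (-u p) 0 :=
  Finsupp.mapRange_apply

lemma fsPos_sub_fsNeg {I : Type*} (u : I →₀ ℤ) : fsPos u - fsNeg u = u := by
  ext p; rw [Finsupp.sub_apply, fsPos_apply, fsNeg_apply]; omega

lemma fsPos_nonneg {I : Type*} (u : I →₀ ℤ) : FsNonneg (fsPos u) := by
  intro p; rw [fsPos_apply]; omega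

lemma fsNeg_nonneg {I : Type*} (u : I →₀ ℤ) : FsNonneg (fsNeg u) := by
  intro p; rw [fsNeg_apply]; omega

lemma fsNonneg_single {I : Type*} (p : I) {x : ℤ} (hx : 0 ≤ x) :
    FsNonneg (Finsupp.single p x) := by
  classical
  intro q
  rw [Finsupp.single_apply]
  split <;> omega

/-! ### `IsFinPerm` -/

lemma isFinPerm_one : IsFinPerm 1 := by
  unfold IsFinPerm
  simp

lemma IsFinPerm.inv {σ : Equiv.Perm ℕ} (h : IsFinPerm σ) : IsFinPerm σ⁻¹ := by
  apply Set.Finite.subset (h.image (fun j => σ⁻¹ j))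
  intro i hi
  simp only [Set.mem_setOf_eq] at hi
  have h1 : σ i ≠ i := by
    intro h'
    apply hi
    nth_rewrite 1 [← h']
    simp
  exact ⟨σ i, fun h' => h1 (σ.injective h'), by simp⟩

lemma IsFinPerm.mul {σ τ : Equiv.Perm ℕ} (hσ : IsFinPerm σ) (hτ : IsFinPerm τ) :
    IsFinPerm (σ * τ) := by
  apply Set.Finite.subset (hσ.union hτ)
  intro i hi
  rcases Classical.em (τ i = i) with h1 | h1
  · left
    simp only [Set.mem_setOf_eq] at hi ⊢
    rwa [Equiv.Perm.mul_apply, h1] at hi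
  · right; exact h1

lemma isFinPerm_swap (a b : ℕ) : IsFinPerm (Equiv.swap a b) := by
  apply Set.Finite.subset ((Set.finite_singleton b).insert a)
  intro i hi
  by_contra h
  simp only [Set.mem_insert_iff, Set.mem_singleton_iff, not_or] at h
  exact hi (Equiv.swap_apply_of_ne_of_ne h.1 h.2)

/-! ### `permActd` -/

def eqIdx (d c : ℕ) (σ : Equiv.Perm ℕ) : ((Fin d → ℕ) × Fin c) ≃ ((Fin d → ℕ) × Fin c) :=
  Equiv.prodCongr ((Equiv.refl (Fin d)).arrowCongr σ) (Equiv.refl (Fin c))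

lemma eqIdx_apply (d c : ℕ) (σ : Equiv.Perm ℕ) (p : (Fin d → ℕ) × Fin c) :
    eqIdx d c σ p = (fun k => σ (p.1 k), p.2) := rfl

lemma eqIdx_symm (d c : ℕ) (σ : Equiv.Perm ℕ) : (eqIdx d c σ).symm = eqIdx d c σ⁻¹ := by
  apply Equiv.ext; intro p; rfl

lemma eqIdx_comp (d c : ℕ) (σ τ : Equiv.Perm ℕ) (p : (Fin d → ℕ) × Fin c) :
    eqIdx d c σ (eqIdx d c τ p) = eqIdx d c (σ * τ) p := rfl

lemma eqIdx_one (d c : ℕ) (p : (Fin d → ℕ) × Fin c) : eqIdx d c 1 p = p := rfl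

lemma permActd_eq (d c : ℕ) (σ : Equiv.Perm ℕ) (u : (Fin d → ℕ) × Fin c →₀ ℤ) :
    permActd d c σ u = Finsupp.equivMapDomain (eqIdx d c σ) u := rfl

lemma permActd_apply (d c : ℕ) (σ : Equiv.Perm ℕ) (u : (Fin d → ℕ) × Fin c →₀ ℤ)
    (p : (Fin d → ℕ) × Fin c) : permActd d c σ u p = u (eqIdx d c σ⁻¹ p) := by
  rw [permActd_eq, Finsupp.equivMapDomain_apply, eqIdx_symm]

lemma permActd_zero (d c : ℕ) (σ : Equiv.Perm ℕ) : permActd d c σ 0 = 0 := by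
  ext p; rw [permActd_apply]; simp

lemma permActd_sub (d c : ℕ) (σ : Equiv.Perm ℕ) (u v : (Fin d → ℕ) × Fin c →₀ ℤ) :
    permActd d c σ (u - v) = permActd d c σ u - permActd d c σ v := by
  ext p; simp only [permActd_apply, Finsupp.sub_apply]

lemma permActd_comp (d c : ℕ) (σ τ : Equiv.Perm ℕ) (u : (Fin d → ℕ) × Fin c →₀ ℤ) :
    permActd d c σ (permActd d c τ u) = permActd d c (σ * τ) u := by
  ext p
  rw [permActd_apply, permActd_apply, permActd_apply]
  congr 1

lemma permActd_one (d c : ℕ) (u : (Fin d → ℕ) × Fin c →₀ ℤ) : permActd d c 1 u = u := by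
  ext p; rw [permActd_apply, inv_one]; rfl

lemma permActd_eq_zero {d c : ℕ} {σ : Equiv.Perm ℕ} {u : (Fin d → ℕ) × Fin c →₀ ℤ}
    (h : permActd d c σ u = 0) : u = 0 := by
  have := congrArg (permActd d c σ⁻¹) h
  rwa [permActd_comp, inv_mul_cancel, permActd_one, permActd_zero] at this

lemma permActd_single (d c : ℕ) (σ : Equiv.Perm ℕ) (p : (Fin d → ℕ) × Fin c) (x : ℤ) :
    permActd d c σ (Finsupp.single p x) = Finsupp.single (eqIdx d c σ p) x := by
  rw [permActd_eq]; exact Finsupp.equivMapDomain_single _ _ _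

lemma fsNonneg_permActd {d c : ℕ} (σ : Equiv.Perm ℕ) {u : (Fin d → ℕ) × Fin c →₀ ℤ}
    (h : FsNonneg u) : FsNonneg (permActd d c σ u) := by
  intro p; rw [permActd_apply]; exact h _

lemma sqle_permActd {d c : ℕ} (σ : Equiv.Perm ℕ) {u v : (Fin d → ℕ) × Fin c →₀ ℤ}
    (h : Sqle u v) : Sqle (permActd d c σ u) (permActd d c σ v) := by
  intro p; rw [permActd_apply, permActd_apply]; exact h _

lemma fsPos_permActd (d c : ℕ) (σ : Equiv.Perm ℕ) (u : (Fin d → ℕ) × Fin c →₀ ℤ) :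
    fsPos (permActd d c σ u) = permActd d c σ (fsPos u) := by
  ext p; rw [fsPos_apply, permActd_apply, permActd_apply, fsPos_apply]

lemma fsNeg_permActd (d c : ℕ) (σ : Equiv.Perm ℕ) (u : (Fin d → ℕ) × Fin c →₀ ℤ) :
    fsNeg (permActd d c σ u) = permActd d c σ (fsNeg u) := by
  ext p; rw [fsNeg_apply, permActd_apply, permActd_apply, fsNeg_apply]

end AuxBasic
section AuxMonoid

open Finsupp

variable {d c : ℕ}

abbrev PairZ (d c : ℕ) :=
  ((Fin d → ℕ) × Fin c →₀ ℤ) × ((Fin d → ℕ) × Fin c →₀ ℤ)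

/-- `M` as an additive submonoid. -/
noncomputable def MSub (d c : ℕ) (L : AddSubgroup ((Fin d → ℕ) × Fin c →₀ ℤ)) :
    AddSubmonoid (((Fin d → ℕ) × Fin c →₀ ℤ) × ((Fin d → ℕ) × Fin c →₀ ℤ)) where
  carrier := {p | p.1 - p.2 ∈ L ∧ FsNonneg p.1 ∧ FsNonneg p.2}
  zero_mem' := by
    refine ⟨by simpa using L.zero_mem, ?_, ?_⟩ <;> intro i <;> simp
  add_mem' := by
    rintro a b ⟨ha1, ha2, ha3⟩ ⟨hb1, hb2, hb3⟩
    refine ⟨?_, ?_, ?_⟩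
    · show (a.1 + b.1) - (a.2 + b.2) ∈ L
      rw [add_sub_add_comm]
      exact add_mem ha1 hb1
    · intro i
      show 0 ≤ (a.1 + b.1) i
      rw [Finsupp.add_apply]
      exact add_nonneg (ha2 i) (hb2 i)
    · intro i
      show 0 ≤ (a.2 + b.2) i
      rw [Finsupp.add_apply]
      exact add_nonneg (ha3 i) (hb3 i)

lemma mem_MSub {L : AddSubgroup ((Fin d → ℕ) × Fin c →₀ ℤ)}
    {x : PairZ d c} :
    x ∈ (MSub d c L : Set (PairZ d c)) ↔ x.1 - x.2 ∈ L ∧ FsNonneg x.1 ∧ FsNonneg x.2 := Iff.rfl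

/-- sum of the values of a finitely supported integer vector -/
def sZ {I : Type*} (u : I →₀ ℤ) : ℤ := u.sum fun _ z => z

lemma sZ_add {I : Type*} (u v : I →₀ ℤ) : sZ (u + v) = sZ u + sZ v :=
  Finsupp.sum_add_index' (fun _ => rfl) (fun _ _ _ => rfl)

lemma sZ_nonneg {I : Type*} {u : I →₀ ℤ} (h : FsNonneg u) : 0 ≤ sZ u :=
  Finset.sum_nonneg fun i _ => h i

lemma sZ_pos {I : Type*} {u : I →₀ ℤ} (h : FsNonneg u) (h0 : u ≠ 0) : 0 < sZ u := by
  obtain ⟨p, hp⟩ := Finsupp.ne_iff.mp h0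
  rw [Finsupp.zero_apply] at hp
  have hmem : p ∈ u.support := Finsupp.mem_support_iff.mpr hp
  have h1 : u p ≤ sZ u := Finset.single_le_sum (fun i _ => h i) hmem
  have h2 := h p
  omega

lemma sZ_pair_pos {v : PairZ d c}
    (h1 : FsNonneg v.1) (h2 : FsNonneg v.2) (h0 : v ≠ 0) : 0 < sZ v.1 + sZ v.2 := by
  by_cases hv1 : v.1 = 0
  · have hv2 : v.2 ≠ 0 := by
      intro h'; exact h0 (Prod.ext_iff.mpr ⟨hv1, h'⟩)
    have := sZ_pos h2 hv2
    have := sZ_nonneg h1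
    omega
  · have := sZ_pos h1 hv1
    have := sZ_nonneg h2
    omega

lemma mem_closure_irr (L : AddSubgroup ((Fin d → ℕ) × Fin c →₀ ℤ)) :
    ∀ u ∈ (MSub d c L : Set (PairZ d c)),
      u ∈ AddSubmonoid.closure {x | IsIrredElem (MSub d c L : Set (PairZ d c)) x} := by
  suffices h : ∀ n : ℕ, ∀ u ∈ (MSub d c L : Set (PairZ d c)), (sZ u.1 + sZ u.2).toNat = n →
      u ∈ AddSubmonoid.closure {x | IsIrredElem (MSub d c L : Set (PairZ d c)) x} by
    intro u hu; exact h _ u hu rfl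
  intro n
  induction n using Nat.strong_induction_on with
  | _ n ih =>
    intro u hu hn
    by_cases h0 : u = 0
    · rw [h0]; exact AddSubmonoid.zero_mem _
    by_cases hirr : IsIrredElem (MSub d c L : Set (PairZ d c)) u
    · exact AddSubmonoid.subset_closure hirr
    have hex : ∃ v ∈ (MSub d c L : Set (PairZ d c)), ∃ w ∈ (MSub d c L : Set (PairZ d c)),
        u = v + w ∧ ¬(v = 0 ∨ w = 0) := by
      by_contra hc
      push_neg at hc
      exact hirr ⟨hu, h0, fun v hv w hw he => hc v hv w hw he⟩
    obtain ⟨v, hv, w, hw, huvw, hne⟩ := hex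
    push_neg at hne
    have hvpos : 0 < sZ v.1 + sZ v.2 := sZ_pair_pos hv.2.1 hv.2.2 hne.1
    have hwpos : 0 < sZ w.1 + sZ w.2 := sZ_pair_pos hw.2.1 hw.2.2 hne.2
    have hsum : sZ u.1 + sZ u.2 = (sZ v.1 + sZ v.2) + (sZ w.1 + sZ w.2) := by
      have h1 : u.1 = v.1 + w.1 := by rw [huvw]; rfl
      have h2 : u.2 = v.2 + w.2 := by rw [huvw]; rfl
      rw [h1, h2, sZ_add, sZ_add]; ring
    rw [huvw]
    refine AddSubmonoid.add_mem _ (ih _ ?_ v hv rfl) (ih _ ?_ w hw rfl) <;> omega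

lemma irr_mem_gen (L : AddSubgroup ((Fin d → ℕ) × Fin c →₀ ℤ))
    {u : PairZ d c}
    (hu : IsIrredElem (MSub d c L : Set (PairZ d c)) u) :
    ∀ A ⊆ (MSub d c L : Set (PairZ d c)), (AddSubmonoid.closure A : Set _) = (MSub d c L : Set (PairZ d c)) →
      u ∈ A := by
  intro A hA hcl
  have huM : u ∈ AddSubmonoid.closure A := by
    rw [← SetLike.mem_coe, hcl]; exact hu.1
  obtain ⟨l, hl, hsum⟩ := AddSubmonoid.exists_multiset_of_mem_closure huM
  have key : ∀ l : Multiset _, (∀ y ∈ l, y ∈ A) → l.sum = u → u ∈ A := by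
    intro l
    induction l using Multiset.induction with
    | empty =>
      intro _ hs
      rw [Multiset.sum_zero] at hs
      exact absurd hs.symm hu.2.1
    | cons a l ihl =>
      intro hmem hs
      rw [Multiset.sum_cons] at hs
      have haM : a ∈ (MSub d c L : Set (PairZ d c)) := hA (hmem a (Multiset.mem_cons_self _ _))
      have hlM : l.sum ∈ (MSub d c L : Set (PairZ d c)) :=
        (MSub d c L).multiset_sum_mem l (fun y hy => hA (hmem y (Multiset.mem_cons_of_mem hy)))
      rcases hu.2.2 a haM l.sum hlM hs.symm with h0 | h0
      · rw [h0, zero_add] at hs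
        exact ihl (fun y hy => hmem y (Multiset.mem_cons_of_mem hy)) hs
      · rw [h0, add_zero] at hs
        rw [← hs]
        exact hmem a (Multiset.mem_cons_self _ _)
  exact key l hl hsum

lemma isHB_irr (L : AddSubgroup ((Fin d → ℕ) × Fin c →₀ ℤ)) :
    IsHilbertBasis (MSub d c L : Set (PairZ d c)) {x | IsIrredElem (MSub d c L : Set (PairZ d c)) x} := by
  refine ⟨fun x hx => hx.1, ?_, fun A hA hcl x hx => irr_mem_gen L hx A hA hcl⟩
  apply Set.Subset.antisymm
  · intro x hx
    have h : AddSubmonoid.closure {x | IsIrredElem (MSub d c L : Set (PairZ d c)) x} ≤ MSub d c L :=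
      AddSubmonoid.closure_le.mpr (fun y hy => hy.1)
    exact h hx
  · intro x hx
    exact mem_closure_irr L x hx

end AuxMonoid
section AuxIrr

open Finsupp

variable {d c : ℕ}

lemma memL_perm_iff (L : AddSubgroup ((Fin d → ℕ) × Fin c →₀ ℤ))
    (hL : ∀ σ, IsFinPerm σ → ∀ u ∈ L, permActd d c σ u ∈ L)
    {σ : Equiv.Perm ℕ} (hσ : IsFinPerm σ) (u : (Fin d → ℕ) × Fin c →₀ ℤ) :
    permActd d c σ u ∈ L ↔ u ∈ L := by
  constructor
  · intro h
    have := hL σ⁻¹ hσ.inv _ h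
    rwa [permActd_comp, inv_mul_cancel, permActd_one] at this
  · exact hL σ hσ u

lemma graver_perm (L : AddSubgroup ((Fin d → ℕ) × Fin c →₀ ℤ))
    (hL : ∀ σ, IsFinPerm σ → ∀ u ∈ L, permActd d c σ u ∈ L)
    {σ : Equiv.Perm ℕ} (hσ : IsFinPerm σ) {g : (Fin d → ℕ) × Fin c →₀ ℤ}
    (hg : g ∈ GraverBasis (L : Set ((Fin d → ℕ) × Fin c →₀ ℤ))) :
    permActd d c σ g ∈ GraverBasis (L : Set ((Fin d → ℕ) × Fin c →₀ ℤ)) := by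
  obtain ⟨h1, h2, h3⟩ := hg
  refine ⟨hL σ hσ g h1, fun h => h2 (permActd_eq_zero h), ?_⟩
  intro v hv hv0 hsq
  have hv' : permActd d c σ⁻¹ v ∈ L := hL σ⁻¹ hσ.inv v hv
  have hsq' : Sqle (permActd d c σ⁻¹ v) g := by
    have := sqle_permActd σ⁻¹ hsq
    rwa [permActd_comp, inv_mul_cancel, permActd_one] at this
  have hv0' : permActd d c σ⁻¹ v ≠ 0 := by
    intro h
    apply hv0
    have := congrArg (permActd d c σ) h
    rwa [permActd_comp, mul_inv_cancel, permActd_one, permActd_zero] at this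
  have hfin := h3 _ hv' hv0' hsq'
  have := congrArg (permActd d c σ) hfin
  rwa [permActd_comp, mul_inv_cancel, permActd_one] at this

/-- Graver elements give irreducible elements of the monoid. -/
lemma graver_irr (L : AddSubgroup ((Fin d → ℕ) × Fin c →₀ ℤ))
    {g : (Fin d → ℕ) × Fin c →₀ ℤ}
    (hg : g ∈ GraverBasis (L : Set ((Fin d → ℕ) × Fin c →₀ ℤ))) :
    IsIrredElem (MSub d c L : Set (PairZ d c)) (fsPos g, fsNeg g) := by
  obtain ⟨hgL, hg0, hmin⟩ := hg
  refine ⟨⟨?_, fsPos_nonneg g, fsNeg_nonneg g⟩, ?_, ?_⟩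
  · show fsPos g - fsNeg g ∈ L
    rw [fsPos_sub_fsNeg]; exact hgL
  · intro h
    obtain ⟨h1, h2⟩ := Prod.ext_iff.mp h
    have h1' : fsPos g = 0 := h1
    have h2' : fsNeg g = 0 := h2
    exact hg0 (by rw [← fsPos_sub_fsNeg g, h1', h2', sub_zero])
  · intro x hx y hy hxy
    have e1 : ∀ q, x.1 q + y.1 q = max (g q) 0 := by
      intro q
      have h1 : fsPos g = x.1 + y.1 := congrArg Prod.fst hxy
      have h2 := congrArg (fun z => z q) h1
      simp only [Finsupp.add_apply, fsPos_apply] at h2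
      omega
    have e2 : ∀ q, x.2 q + y.2 q = max (-g q) 0 := by
      intro q
      have h1 : fsNeg g = x.2 + y.2 := congrArg Prod.snd hxy
      have h2 := congrArg (fun z => z q) h1
      simp only [Finsupp.add_apply, fsNeg_apply] at h2
      omega
    by_cases h0 : x.1 - x.2 = 0
    · left
      have hxeq : ∀ q, x.1 q = x.2 q := by
        intro q
        have := congrArg (fun z => z q) h0
        simp only [Finsupp.sub_apply, Finsupp.zero_apply] at this
        omega
      have hx1 : x.1 = 0 := by
        ext q
        have := e1 q; have := e2 q; have := hxeq q
        have := hx.2.1 q; have := hx.2.2 q; have := hy.2.1 q; have := hy.2.2 q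
        rw [Finsupp.zero_apply]
        omega
      have hx2 : x.2 = 0 := by
        ext q
        have := e1 q; have := e2 q; have := hxeq q
        have := hx.2.1 q; have := hx.2.2 q; have := hy.2.1 q; have := hy.2.2 q
        rw [Finsupp.zero_apply]
        omega
      exact Prod.ext_iff.mpr ⟨hx1, hx2⟩
    · have hsq : Sqle (x.1 - x.2) g := by
        intro q
        rw [Finsupp.sub_apply]
        apply pt_to_sqle
        have := e1 q; have := e2 q
        have := hx.2.1 q; have := hx.2.2 q; have := hy.2.1 q; have := hy.2.2 q
        omega
      have heq := hmin _ hx.1 h0 hsq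
      right
      have hgq : ∀ q, x.1 q - x.2 q = g q := by
        intro q
        have := congrArg (fun z => z q) heq
        simpa only [Finsupp.sub_apply] using this
      have hy1 : y.1 = 0 := by
        ext q
        have := e1 q; have := e2 q; have := hgq q
        have := hx.2.1 q; have := hx.2.2 q; have := hy.2.1 q; have := hy.2.2 q
        rw [Finsupp.zero_apply]
        omega
      have hy2 : y.2 = 0 := by
        ext q
        have := e1 q; have := e2 q; have := hgq q
        have := hx.2.1 q; have := hx.2.2 q; have := hy.2.1 q; have := hy.2.2 q
        rw [Finsupp.zero_apply]
        omega
      exact Prod.ext_iff.mpr ⟨hy1, hy2⟩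

/-- Unit vectors not in the lattice give irreducible "diagonal" elements. -/
lemma single_irr (L : AddSubgroup ((Fin d → ℕ) × Fin c →₀ ℤ))
    {p : (Fin d → ℕ) × Fin c} (hp : Finsupp.single p (1:ℤ) ∉ L) :
    IsIrredElem (MSub d c L : Set (PairZ d c))
      (Finsupp.single p 1, Finsupp.single p 1) := by
  classical
  have hsp : Finsupp.single p (1:ℤ) p = 1 := Finsupp.single_eq_same
  have hso : ∀ q, q ≠ p → Finsupp.single p (1:ℤ) q = 0 :=
    fun q hq => Finsupp.single_eq_of_ne' (Ne.symm hq)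
  refine ⟨⟨?_, fsNonneg_single p (by norm_num), fsNonneg_single p (by norm_num)⟩, ?_, ?_⟩
  · show Finsupp.single p (1:ℤ) - Finsupp.single p 1 ∈ L
    rw [sub_self]; exact L.zero_mem
  · intro h
    have h1 : Finsupp.single p (1:ℤ) = 0 := (Prod.ext_iff.mp h).1
    have h2 : Finsupp.single p (1:ℤ) p = 0 := by rw [h1]; simp
    rw [hsp] at h2
    exact one_ne_zero h2
  · intro x hx y hy hxy
    have e1 : ∀ q, x.1 q + y.1 q = Finsupp.single p (1:ℤ) q := by
      intro q
      have h1 : Finsupp.single p (1:ℤ) = x.1 + y.1 := congrArg Prod.fst hxy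
      have h2 := congrArg (fun z => z q) h1
      simp only [Finsupp.add_apply] at h2
      omega
    have e2 : ∀ q, x.2 q + y.2 q = Finsupp.single p (1:ℤ) q := by
      intro q
      have h1 : Finsupp.single p (1:ℤ) = x.2 + y.2 := congrArg Prod.snd hxy
      have h2 := congrArg (fun z => z q) h1
      simp only [Finsupp.add_apply] at h2
      omega
    have hoff : ∀ q, q ≠ p → x.1 q = 0 ∧ x.2 q = 0 ∧ y.1 q = 0 ∧ y.2 q = 0 := by
      intro q hq
      have h1 := e1 q; have h2 := e2 q
      rw [hso q hq] at h1 h2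
      have := hx.2.1 q; have := hx.2.2 q; have := hy.2.1 q; have := hy.2.2 q
      omega
    have hx1p : x.1 p = 0 ∨ x.1 p = 1 := by
      have := e1 p; rw [hsp] at this
      have := hx.2.1 p; have := hy.2.1 p; omega
    have hx2p : x.2 p = 0 ∨ x.2 p = 1 := by
      have := e2 p; rw [hsp] at this
      have := hx.2.2 p; have := hy.2.2 p; omega
    rcases hx1p with h1 | h1 <;> rcases hx2p with h2 | h2
    · -- x = 0
      left
      have hx1 : x.1 = 0 := by
        ext q; rw [Finsupp.zero_apply]
        by_cases hq : q = p
        · subst hq; exact h1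
        · exact (hoff q hq).1
      have hx2 : x.2 = 0 := by
        ext q; rw [Finsupp.zero_apply]
        by_cases hq : q = p
        · subst hq; exact h2
        · exact (hoff q hq).2.1
      exact Prod.ext_iff.mpr ⟨hx1, hx2⟩
    · -- x.1 p = 0, x.2 p = 1 : -single ∈ L, contradiction
      exfalso
      have hkey : x.1 - x.2 = -Finsupp.single p 1 := by
        ext q
        rw [Finsupp.sub_apply, Finsupp.neg_apply]
        by_cases hq : q = p
        · subst hq; rw [h1, h2, hsp]; norm_num
        · obtain ⟨a, b, _, _⟩ := hoff q hq
          rw [a, b, hso q hq]; ring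
      have hL' := hx.1
      rw [hkey] at hL'
      exact hp (by simpa using neg_mem hL')
    · -- x.1 p = 1, x.2 p = 0 : single ∈ L, contradiction
      exfalso
      have hkey : x.1 - x.2 = Finsupp.single p 1 := by
        ext q
        rw [Finsupp.sub_apply]
        by_cases hq : q = p
        · subst hq; rw [h1, h2, hsp]; ring
        · obtain ⟨a, b, _, _⟩ := hoff q hq
          rw [a, b, hso q hq]; ring
      have hL' := hx.1
      rw [hkey] at hL'
      exact hp hL'
    · -- y = 0
      right
      have hy1p : y.1 p = 0 := by have := e1 p; rw [hsp] at this; omega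
      have hy2p : y.2 p = 0 := by have := e2 p; rw [hsp] at this; omega
      have hy1' : y.1 = 0 := by
        ext q; rw [Finsupp.zero_apply]
        by_cases hq : q = p
        · subst hq; exact hy1p
        · exact (hoff q hq).2.2.1
      have hy2' : y.2 = 0 := by
        ext q; rw [Finsupp.zero_apply]
        by_cases hq : q = p
        · subst hq; exact hy2p
        · exact (hoff q hq).2.2.2
      exact Prod.ext_iff.mpr ⟨hy1', hy2'⟩

/-- An irreducible element with distinct components comes from a Graver element. -/
lemma irr_ne (L : AddSubgroup ((Fin d → ℕ) × Fin c →₀ ℤ)) {u : PairZ d c}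
    (hu : IsIrredElem (MSub d c L : Set (PairZ d c)) u) (hne : u.1 ≠ u.2) :
    u.1 - u.2 ∈ GraverBasis (L : Set ((Fin d → ℕ) × Fin c →₀ ℤ)) ∧
      u.1 = fsPos (u.1 - u.2) ∧ u.2 = fsNeg (u.1 - u.2) := by
  classical
  obtain ⟨⟨hdiff, hn1, hn2⟩, hu0, hsplit⟩ := hu
  have hdisj : ∀ q, u.1 q = 0 ∨ u.2 q = 0 := by
    intro q
    by_contra hq
    push_neg at hq
    have hq1 : (1:ℤ) ≤ u.1 q := by have := hn1 q; have := hq.1; omega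
    have hq2 : (1:ℤ) ≤ u.2 q := by have := hn2 q; have := hq.2; omega
    set e : (Fin d → ℕ) × Fin c →₀ ℤ := Finsupp.single q 1 with hedef
    have heq : e q = 1 := Finsupp.single_eq_same
    have heo : ∀ r, r ≠ q → e r = 0 := fun r hr => Finsupp.single_eq_of_ne' (Ne.symm hr)
    have hxm : (u.1 - e, u.2 - e) ∈ (MSub d c L : Set (PairZ d c)) := by
      refine ⟨?_, ?_, ?_⟩
      · show u.1 - e - (u.2 - e) ∈ L
        rw [sub_sub_sub_cancel_right]
        exact hdiff
      · intro r
        show 0 ≤ (u.1 - e) r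
        rw [Finsupp.sub_apply]
        by_cases hr : r = q
        · subst hr; rw [heq]; omega
        · rw [heo r hr]; have := hn1 r; omega
      · intro r
        show 0 ≤ (u.2 - e) r
        rw [Finsupp.sub_apply]
        by_cases hr : r = q
        · subst hr; rw [heq]; omega
        · rw [heo r hr]; have := hn2 r; omega
    have hym : (e, e) ∈ (MSub d c L : Set (PairZ d c)) := by
      refine ⟨?_, fsNonneg_single q (by norm_num), fsNonneg_single q (by norm_num)⟩
      show e - e ∈ L
      rw [sub_self]; exact L.zero_mem
    have hdecomp : u = (u.1 - e, u.2 - e) + (e, e) := by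
      refine Prod.ext_iff.mpr ⟨?_, ?_⟩
      · show u.1 = u.1 - e + e
        rw [sub_add_cancel]
      · show u.2 = u.2 - e + e
        rw [sub_add_cancel]
    rcases hsplit _ hxm _ hym hdecomp with h | h
    · obtain ⟨ha, hb⟩ := Prod.ext_iff.mp h
      have h1 : u.1 = e := sub_eq_zero.mp ha
      have h2 : u.2 = e := sub_eq_zero.mp hb
      exact hne (h1.trans h2.symm)
    · have h1 : e = 0 := (Prod.ext_iff.mp h).1
      have hco : e q = 0 := by rw [h1]; simp
      rw [heq] at hco
      exact one_ne_zero hco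
  have hrep1 : u.1 = fsPos (u.1 - u.2) := by
    ext q
    rw [fsPos_apply, Finsupp.sub_apply]
    have := hn1 q; have := hn2 q
    rcases hdisj q with h | h <;> omega
  have hrep2 : u.2 = fsNeg (u.1 - u.2) := by
    ext q
    rw [fsNeg_apply, Finsupp.sub_apply]
    have := hn1 q; have := hn2 q
    rcases hdisj q with h | h <;> omega
  refine ⟨⟨hdiff, sub_ne_zero.mpr hne, ?_⟩, hrep1, hrep2⟩
  intro v hv hv0 hsq
  have hwL : u.1 - u.2 - v ∈ L := sub_mem hdiff hv
  have hdec1 : u.1 = fsPos v + fsPos (u.1 - u.2 - v) := by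
    ext q
    obtain ⟨hq1, hq2⟩ := hsq q
    have hsgn := pt_of_sqle hq1 hq2
    conv_lhs => rw [hrep1]
    simp only [Finsupp.add_apply, fsPos_apply, Finsupp.sub_apply] at hsgn ⊢
    omega
  have hdec2 : u.2 = fsNeg v + fsNeg (u.1 - u.2 - v) := by
    ext q
    obtain ⟨hq1, hq2⟩ := hsq q
    have hsgn := pt_of_sqle hq1 hq2
    conv_lhs => rw [hrep2]
    simp only [Finsupp.add_apply, fsNeg_apply, Finsupp.sub_apply] at hsgn ⊢
    omega
  have hm1 : (fsPos v, fsNeg v) ∈ (MSub d c L : Set (PairZ d c)) := by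
    refine ⟨?_, fsPos_nonneg v, fsNeg_nonneg v⟩
    show fsPos v - fsNeg v ∈ L
    rw [fsPos_sub_fsNeg]; exact hv
  have hm2 : (fsPos (u.1 - u.2 - v), fsNeg (u.1 - u.2 - v)) ∈
      (MSub d c L : Set (PairZ d c)) := by
    refine ⟨?_, fsPos_nonneg _, fsNeg_nonneg _⟩
    show fsPos _ - fsNeg _ ∈ L
    rw [fsPos_sub_fsNeg]; exact hwL
  have hdec : u = (fsPos v, fsNeg v) + (fsPos (u.1 - u.2 - v), fsNeg (u.1 - u.2 - v)) :=
    Prod.ext_iff.mpr ⟨hdec1, hdec2⟩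
  rcases hsplit _ hm1 _ hm2 hdec with h | h
  · exfalso
    obtain ⟨ha, hb⟩ := Prod.ext_iff.mp h
    have ha' : fsPos v = 0 := ha
    have hb' : fsNeg v = 0 := hb
    exact hv0 (by rw [← fsPos_sub_fsNeg v, ha', hb', sub_zero])
  · obtain ⟨ha, hb⟩ := Prod.ext_iff.mp h
    have ha' : fsPos (u.1 - u.2 - v) = 0 := ha
    have hb' : fsNeg (u.1 - u.2 - v) = 0 := hb
    have hw0 : u.1 - u.2 - v = 0 := by
      rw [← fsPos_sub_fsNeg (u.1 - u.2 - v), ha', hb', sub_zero]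
    have := sub_eq_zero.mp hw0
    exact this.symm

/-- An irreducible element with equal components is a diagonal unit vector. -/
lemma irr_eq (L : AddSubgroup ((Fin d → ℕ) × Fin c →₀ ℤ)) {u : PairZ d c}
    (hu : IsIrredElem (MSub d c L : Set (PairZ d c)) u) (he : u.1 = u.2) :
    ∃ p, u.1 = Finsupp.single p 1 ∧ Finsupp.single p (1:ℤ) ∉ L := by
  classical
  obtain ⟨⟨hdiff, hn1, hn2⟩, hu0, hsplit⟩ := hu
  have h1 : u.1 ≠ 0 := by
    intro h
    exact hu0 (Prod.ext_iff.mpr ⟨h, by rw [← he]; exact h⟩)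
  obtain ⟨q, hq⟩ := Finsupp.ne_iff.mp h1
  rw [Finsupp.zero_apply] at hq
  have hq1 : (1:ℤ) ≤ u.1 q := by have := hn1 q; omega
  set e : (Fin d → ℕ) × Fin c →₀ ℤ := Finsupp.single q 1 with hedef
  have heq : e q = 1 := Finsupp.single_eq_same
  have heo : ∀ r, r ≠ q → e r = 0 := fun r hr => Finsupp.single_eq_of_ne' (Ne.symm hr)
  have hem : (e, e) ∈ (MSub d c L : Set (PairZ d c)) := by
    refine ⟨?_, fsNonneg_single q (by norm_num), fsNonneg_single q (by norm_num)⟩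
    show e - e ∈ L
    rw [sub_self]; exact L.zero_mem
  have hrm : (u.1 - e, u.1 - e) ∈ (MSub d c L : Set (PairZ d c)) := by
    have hnn : FsNonneg (u.1 - e) := by
      intro r
      rw [Finsupp.sub_apply]
      by_cases hr : r = q
      · subst hr; rw [heq]; omega
      · rw [heo r hr]; have := hn1 r; omega
    refine ⟨?_, hnn, hnn⟩
    show u.1 - e - (u.1 - e) ∈ L
    rw [sub_self]; exact L.zero_mem
  have hdecomp : u = (e, e) + (u.1 - e, u.1 - e) := by
    refine Prod.ext_iff.mpr ⟨?_, ?_⟩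
    · show u.1 = e + (u.1 - e)
      abel
    · show u.2 = e + (u.1 - e)
      rw [← he]; abel
  rcases hsplit _ hem _ hrm hdecomp with h | h
  · exfalso
    have h1' : e = 0 := (Prod.ext_iff.mp h).1
    have hco : e q = 0 := by rw [h1']; simp
    rw [heq] at hco
    exact one_ne_zero hco
  · have h1' : u.1 - e = 0 := (Prod.ext_iff.mp h).1
    have hue : u.1 = e := sub_eq_zero.mp h1'
    refine ⟨q, hue, ?_⟩
    intro heL
    have hm1 : (e, (0 : (Fin d → ℕ) × Fin c →₀ ℤ)) ∈ (MSub d c L : Set (PairZ d c)) := by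
      refine ⟨?_, fsNonneg_single q (by norm_num), fun i => by simp⟩
      show e - 0 ∈ L
      rwa [sub_zero]
    have hm2 : ((0 : (Fin d → ℕ) × Fin c →₀ ℤ), e) ∈ (MSub d c L : Set (PairZ d c)) := by
      refine ⟨?_, fun i => by simp, fsNonneg_single q (by norm_num)⟩
      show (0:_) - e ∈ L
      rw [zero_sub]
      exact neg_mem heL
    have hdec2 : u = (e, (0:_)) + ((0:_), e) := by
      refine Prod.ext_iff.mpr ⟨?_, ?_⟩
      · show u.1 = e + 0
        rw [add_zero]; exact hue
      · show u.2 = 0 + e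
        rw [zero_add, ← he]; exact hue
    rcases hsplit _ hm1 _ hm2 hdec2 with h' | h'
    · have h1'' : e = 0 := (Prod.ext_iff.mp h').1
      have hco : e q = 0 := by rw [h1'']; simp
      rw [heq] at hco
      exact one_ne_zero hco
    · have h1'' : e = 0 := (Prod.ext_iff.mp h').2
      have hco : e q = 0 := by rw [h1'']; simp
      rw [heq] at hco
      exact one_ne_zero hco

end AuxIrr
section AuxNormalize

open Finsupp

lemma exists_finperm_prescribe : ∀ (m : ℕ) (f : ℕ → ℕ), Set.InjOn f (Set.Iio m) →
    ∃ σ : Equiv.Perm ℕ, IsFinPerm σ ∧ ∀ i < m, σ i = f i := by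
  intro m
  induction m with
  | zero => exact fun f _ => ⟨1, isFinPerm_one, fun i hi => absurd hi (by omega)⟩
  | succ m ih =>
    intro f hf
    obtain ⟨σ', hσ', hval⟩ := ih f (hf.mono (fun x hx => lt_trans hx (Nat.lt_succ_self m)))
    refine ⟨Equiv.swap (f m) (σ' m) * σ', (isFinPerm_swap _ _).mul hσ', ?_⟩
    intro i hi
    rcases Nat.lt_succ_iff_lt_or_eq.mp hi with h | h
    · have h1 : σ' i = f i := hval i h
      show Equiv.swap (f m) (σ' m) (σ' i) = f i
      rw [h1]
      apply Equiv.swap_apply_of_ne_of_ne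
      · intro hcon
        have := hf (Set.mem_Iio.mpr (show i < m + 1 by omega))
          (Set.mem_Iio.mpr (Nat.lt_succ_self m)) hcon
        omega
      · intro hcon
        rw [← h1] at hcon
        have := σ'.injective hcon
        omega
    · subst h
      show Equiv.swap (f i) (σ' i) (σ' i) = f i
      exact Equiv.swap_apply_right _ _

lemma normalize_idx (d c : ℕ) (p : (Fin d → ℕ) × Fin c) :
    ∃ σ : Equiv.Perm ℕ, IsFinPerm σ ∧ ∃ p₀ : (Fin d → ℕ) × Fin c,
      (∀ k, p₀.1 k < d) ∧ eqIdx d c σ p₀ = p := by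
  classical
  obtain ⟨R, hmemR, hcard⟩ : ∃ R : Finset ℕ, (∀ k, p.1 k ∈ R) ∧ R.card ≤ d :=
    ⟨Finset.image p.1 Finset.univ,
      fun k => Finset.mem_image_of_mem _ (Finset.mem_univ k),
      le_trans Finset.card_image_le (by simp)⟩
  have f0 : Fin R.card ≃o {x // x ∈ R} := R.orderIsoOfFin rfl
  set f : ℕ → ℕ := fun i => if h : i < R.card then (f0 ⟨i, h⟩ : ℕ) else i with hfdef
  have hinj : Set.InjOn f (Set.Iio R.card) := by
    intro x hx y hy hxy
    rw [Set.mem_Iio] at hx hy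
    rw [hfdef] at hxy
    simp only [dif_pos hx, dif_pos hy] at hxy
    have h2 := f0.injective (Subtype.coe_injective hxy)
    exact congrArg Fin.val h2
  obtain ⟨σ, hσ, hval⟩ := exists_finperm_prescribe R.card f hinj
  refine ⟨σ, hσ, ((fun k => ((f0.symm ⟨p.1 k, hmemR k⟩ : Fin R.card) : ℕ)), p.2), ?_, ?_⟩
  · intro k
    exact lt_of_lt_of_le (f0.symm ⟨p.1 k, hmemR k⟩).isLt hcard
  · have hcomp : ∀ k, σ ((f0.symm ⟨p.1 k, hmemR k⟩ : Fin R.card) : ℕ) = p.1 k := by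
      intro k
      have hlt : ((f0.symm ⟨p.1 k, hmemR k⟩ : Fin R.card) : ℕ) < R.card :=
        (f0.symm ⟨p.1 k, hmemR k⟩).isLt
      rw [hval _ hlt, hfdef]
      simp only [dif_pos hlt, Fin.eta, OrderIso.apply_symm_apply]
    exact Prod.ext_iff.mpr ⟨funext hcomp, rfl⟩

end AuxNormalize
/-- For `I = ℕ^d × [c]`, a `Sym`-invariant lattice `L ⊆ ℤ^{(I)}` and
`M = φ⁻¹(L) ∩ (ℤ_{≥0}^{(I)} ⊕ ℤ_{≥0}^{(I)})` with `φ(u, v) = u - v` (and diagonal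
`Sym`-action on pairs): `M` has a finite equivariant Hilbert basis iff `L` has a finite
equivariant Graver basis. -/
theorem hilbert_iff_graver (d c : ℕ) (hd : 0 < d) (hc : 0 < c)
    (L : AddSubgroup ((Fin d → ℕ) × Fin c →₀ ℤ))
    (hL : ∀ σ, IsFinPerm σ → ∀ u ∈ L, permActd d c σ u ∈ L)
    (M : Set (((Fin d → ℕ) × Fin c →₀ ℤ) × ((Fin d → ℕ) × Fin c →₀ ℤ)))
    (hM : M = {p | p.1 - p.2 ∈ L ∧ FsNonneg p.1 ∧ FsNonneg p.2}) :
    (∃ H : Finset (((Fin d → ℕ) × Fin c →₀ ℤ) × ((Fin d → ℕ) × Fin c →₀ ℤ)),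
        ↑H ⊆ M ∧ IsHilbertBasis M
          {w | ∃ σ, IsFinPerm σ ∧ ∃ p ∈ H, w = (permActd d c σ p.1, permActd d c σ p.2)}) ↔
    (∃ G : Finset ((Fin d → ℕ) × Fin c →₀ ℤ),
        ↑G ⊆ (L : Set ((Fin d → ℕ) × Fin c →₀ ℤ)) ∧
        symOrbitd d c ↑G = GraverBasis (L : Set ((Fin d → ℕ) × Fin c →₀ ℤ))) := by
  classical
  have hMeq : M = (MSub d c L : Set (PairZ d c)) := hM
  subst hMeq
  constructor
  · -- Hilbert basis ⇒ Graver basis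
    rintro ⟨H, hHM, hsub, hcl, hmin⟩
    have hSymHM : {w | ∃ σ, IsFinPerm σ ∧ ∃ p ∈ H,
        w = (permActd d c σ p.1, permActd d c σ p.2)} ⊆ (MSub d c L : Set (PairZ d c)) := by
      rintro w ⟨σ, hσ, p, hpH, rfl⟩
      have hp := hHM (Finset.mem_coe.mpr hpH)
      refine ⟨?_, fsNonneg_permActd σ hp.2.1, fsNonneg_permActd σ hp.2.2⟩
      show permActd d c σ p.1 - permActd d c σ p.2 ∈ L
      rw [← permActd_sub]
      exact hL σ hσ _ hp.1
    have hIrrGen := isHB_irr (d := d) (c := c) L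
    have hSymHIrr : {w | ∃ σ, IsFinPerm σ ∧ ∃ p ∈ H,
        w = (permActd d c σ p.1, permActd d c σ p.2)} ⊆
        {x | IsIrredElem (MSub d c L : Set (PairZ d c)) x} :=
      hmin _ (fun x hx => hx.1) hIrrGen.2.1
    have hIrrSymH : {x | IsIrredElem (MSub d c L : Set (PairZ d c)) x} ⊆
        {w | ∃ σ, IsFinPerm σ ∧ ∃ p ∈ H,
          w = (permActd d c σ p.1, permActd d c σ p.2)} :=
      fun x hx => irr_mem_gen L hx _ hSymHM hcl
    refine ⟨(H.image fun p => p.1 - p.2).erase 0, ?_, ?_⟩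
    · intro g hg
      obtain ⟨hg0, hgim⟩ := Finset.mem_erase.mp (Finset.mem_coe.mp hg)
      obtain ⟨p, hpH, rfl⟩ := Finset.mem_image.mp hgim
      exact (hHM (Finset.mem_coe.mpr hpH)).1
    · ext g
      constructor
      · rintro ⟨σ, hσ, b, hbG, rfl⟩
        obtain ⟨hb0, hbim⟩ := Finset.mem_erase.mp (Finset.mem_coe.mp hbG)
        obtain ⟨p, hpH, rfl⟩ := Finset.mem_image.mp hbim
        have hpIrr : IsIrredElem (MSub d c L : Set (PairZ d c)) p :=
          hSymHIrr ⟨1, isFinPerm_one, p, hpH, by rw [permActd_one, permActd_one]⟩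
        have hne : p.1 ≠ p.2 := fun h => hb0 (by rw [h, sub_self])
        exact graver_perm L hL hσ (irr_ne L hpIrr hne).1
      · intro hg
        have hIrr := graver_irr L hg
        obtain ⟨σ, hσ, p, hpH, heq2⟩ := hIrrSymH hIrr
        have h1 : fsPos g = permActd d c σ p.1 := (Prod.ext_iff.mp heq2).1
        have h2 : fsNeg g = permActd d c σ p.2 := (Prod.ext_iff.mp heq2).2
        have hgeq : g = permActd d c σ (p.1 - p.2) := by
          rw [permActd_sub, ← h1, ← h2, fsPos_sub_fsNeg]
        have hne : p.1 - p.2 ≠ 0 := by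
          intro h0
          exact hg.2.1 (by rw [hgeq, h0, permActd_zero])
        exact ⟨σ, hσ, p.1 - p.2,
          Finset.mem_coe.mpr (Finset.mem_erase.mpr ⟨hne, Finset.mem_image_of_mem _ hpH⟩),
          hgeq⟩
  · -- Graver basis ⇒ Hilbert basis
    rintro ⟨G, hGL, hG⟩
    set reps : Finset ((Fin d → ℕ) × Fin c) :=
      Finset.image (fun q : (Fin d → Fin d) × Fin c => ((fun k => (q.1 k : ℕ)), q.2))
        Finset.univ with hreps
    set E : Finset (PairZ d c) :=
      (reps.filter (fun p => Finsupp.single p (1:ℤ) ∉ L)).image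
        (fun p => (Finsupp.single p (1:ℤ), Finsupp.single p (1:ℤ))) with hE
    set H : Finset (PairZ d c) := G.image (fun g => (fsPos g, fsNeg g)) ∪ E with hH
    have hHM : ↑H ⊆ (MSub d c L : Set (PairZ d c)) := by
      intro x hx
      rw [Finset.mem_coe, hH, Finset.mem_union] at hx
      rcases hx with hx | hx
      · obtain ⟨g, hgG, rfl⟩ := Finset.mem_image.mp hx
        have hgL' : g ∈ L := hGL (Finset.mem_coe.mpr hgG)
        exact ⟨by show fsPos g - fsNeg g ∈ L; rw [fsPos_sub_fsNeg]; exact hgL',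
          fsPos_nonneg g, fsNeg_nonneg g⟩
      · rw [hE] at hx
        obtain ⟨p, hp, rfl⟩ := Finset.mem_image.mp hx
        refine ⟨?_, fsNonneg_single p (by norm_num), fsNonneg_single p (by norm_num)⟩
        show Finsupp.single p (1:ℤ) - Finsupp.single p 1 ∈ L
        rw [sub_self]; exact L.zero_mem
    have hGsub : ∀ g ∈ G, g ∈ GraverBasis (L : Set ((Fin d → ℕ) × Fin c →₀ ℤ)) := by
      intro g hgG
      rw [← hG]
      exact ⟨1, isFinPerm_one, g, Finset.mem_coe.mpr hgG, (permActd_one d c g).symm⟩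
    have hSymEq : {w | ∃ σ, IsFinPerm σ ∧ ∃ p ∈ H,
        w = (permActd d c σ p.1, permActd d c σ p.2)} =
        {x | IsIrredElem (MSub d c L : Set (PairZ d c)) x} := by
      ext w
      constructor
      · rintro ⟨σ, hσ, p, hpH, rfl⟩
        rw [hH, Finset.mem_union] at hpH
        rcases hpH with hp | hp
        · obtain ⟨g, hgG, rfl⟩ := Finset.mem_image.mp hp
          have hgrav := graver_perm L hL hσ (hGsub g hgG)
          have hthis := graver_irr L hgrav
          rw [fsPos_permActd, fsNeg_permActd] at hthis
          exact hthis
        · rw [hE] at hp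
          obtain ⟨p, hpf, rfl⟩ := Finset.mem_image.mp hp
          obtain ⟨hpreps, hpL⟩ := Finset.mem_filter.mp hpf
          have h1 : permActd d c σ (Finsupp.single p (1:ℤ)) =
              Finsupp.single (eqIdx d c σ p) 1 := permActd_single d c σ p 1
          have hnotin : Finsupp.single (eqIdx d c σ p) (1:ℤ) ∉ L := by
            intro hcon
            rw [← h1] at hcon
            exact hpL ((memL_perm_iff L hL hσ _).mp hcon)
          have hthis := single_irr L hnotin
          rw [← h1] at hthis
          exact hthis
      · intro hw
        by_cases hne : w.1 = w.2
        · obtain ⟨p, hw1, hpL⟩ := irr_eq L hw hne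
          obtain ⟨σ, hσ, p₀, hp₀lt, hp₀eq⟩ := normalize_idx d c p
          have hps : Finsupp.single p (1:ℤ) = permActd d c σ (Finsupp.single p₀ 1) := by
            rw [permActd_single, hp₀eq]
          have hp₀L : Finsupp.single p₀ (1:ℤ) ∉ L := by
            intro hcon
            apply hpL
            rw [hps]
            exact hL σ hσ _ hcon
          have hp₀reps : p₀ ∈ reps := by
            rw [hreps]
            apply Finset.mem_image.mpr
            exact ⟨((fun k => ⟨p₀.1 k, hp₀lt k⟩), p₀.2), Finset.mem_univ _,
              Prod.ext_iff.mpr ⟨funext (fun k => rfl), rfl⟩⟩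
          refine ⟨σ, hσ, (Finsupp.single p₀ 1, Finsupp.single p₀ 1), ?_, ?_⟩
          · rw [hH, Finset.mem_union]
            right
            rw [hE]
            exact Finset.mem_image_of_mem _ (Finset.mem_filter.mpr ⟨hp₀reps, hp₀L⟩)
          · refine Prod.ext_iff.mpr ⟨?_, ?_⟩
            · show w.1 = permActd d c σ (Finsupp.single p₀ 1)
              rw [← hps]; exact hw1
            · show w.2 = permActd d c σ (Finsupp.single p₀ 1)
              rw [← hps, ← hne]; exact hw1
        · obtain ⟨hgrav, hw1, hw2⟩ := irr_ne L hw hne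
          have hmem : w.1 - w.2 ∈ symOrbitd d c ↑G := by rw [hG]; exact hgrav
          obtain ⟨σ, hσ, g₀, hg₀G, hgeq⟩ := hmem
          refine ⟨σ, hσ, (fsPos g₀, fsNeg g₀), ?_, ?_⟩
          · rw [hH, Finset.mem_union]
            left
            exact Finset.mem_image_of_mem _ (Finset.mem_coe.mp hg₀G)
          · refine Prod.ext_iff.mpr ⟨?_, ?_⟩
            · show w.1 = permActd d c σ (fsPos g₀)
              rw [hw1, hgeq, fsPos_permActd]
            · show w.2 = permActd d c σ (fsNeg g₀)
              rw [hw2, hgeq, fsNeg_permActd]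
    refine ⟨H, hHM, ?_⟩
    rw [hSymEq]
    exact isHB_irr L
end

section
/- Let c, d be positive integers, I = ℕ^d × [c], I_n = [n]^d × [c], and let L ⊆ ℤ^(I) be a lattice with truncations L_n = L ∩ ℤ^(I_n). If for every n ≥ 1 the subset B_n ⊆ L_n is a generating set (respectively a Markov basis, respectively the Graver basis) of L_n, then B = ∪_{n≥1} B_n is a generating set (respectively a Markov basis, respectively the Graver basis) of L. Moreover, if ≺ is a term order on ℤ_{≥0}^(I) and each B_n is a Gröbner basis of L_n with respect to the restriction of ≺ to ℤ_{≥0}^(I_n), then B is a Gröbner basis of L with respect to ≺. -/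
open Finsupp

section Aux

variable {d c : ℕ}

lemma mem_suppSubgroup {n : ℕ} {u : (Fin d → ℕ) × Fin c →₀ ℤ} :
    u ∈ suppSubgroup d c n ↔ SuppIn d c n u := Iff.rfl

/-- A bound on the support of `u`. -/
noncomputable def nbound (u : (Fin d → ℕ) × Fin c →₀ ℤ) : ℕ :=
  (u.support.sup fun p => Finset.univ.sup p.1) + 1

lemma one_le_nbound (u : (Fin d → ℕ) × Fin c →₀ ℤ) : 1 ≤ nbound u :=
  Nat.le_add_left 1 _

lemma suppIn_nbound (u : (Fin d → ℕ) × Fin c →₀ ℤ) : SuppIn d c (nbound u) u := by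
  intro p hp k
  have hmem : p ∈ u.support := Finsupp.mem_support_iff.2 hp
  have h1 : p.1 k ≤ Finset.univ.sup p.1 := Finset.le_sup (Finset.mem_univ k)
  have h2 : Finset.univ.sup p.1 ≤ u.support.sup fun p => Finset.univ.sup p.1 :=
    Finset.le_sup (f := fun p => Finset.univ.sup p.1) hmem
  exact Nat.lt_succ_of_le (h1.trans h2)

lemma suppIn_mono {n m : ℕ} (hnm : n ≤ m) {u : (Fin d → ℕ) × Fin c →₀ ℤ}
    (h : SuppIn d c n u) : SuppIn d c m u :=
  fun p hp k => lt_of_lt_of_le (h p hp k) hnm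

lemma latFiber_subset (L : AddSubgroup ((Fin d → ℕ) × Fin c →₀ ℤ)) (n : ℕ)
    (u : (Fin d → ℕ) × Fin c →₀ ℤ) :
    latFiber (↑(L ⊓ suppSubgroup d c n) : Set ((Fin d → ℕ) × Fin c →₀ ℤ)) u
      ⊆ latFiber (L : Set ((Fin d → ℕ) × Fin c →₀ ℤ)) u := by
  rintro v ⟨hv1, hv2⟩
  exact ⟨hv1, ((AddSubgroup.mem_inf).1 hv2).1⟩

lemma mem_latFiber_trunc {L : AddSubgroup ((Fin d → ℕ) × Fin c →₀ ℤ)} {n : ℕ}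
    {u v : (Fin d → ℕ) × Fin c →₀ ℤ} (hu : SuppIn d c n u) (hv : SuppIn d c n v)
    (hmem : v ∈ latFiber (L : Set ((Fin d → ℕ) × Fin c →₀ ℤ)) u) :
    v ∈ latFiber (↑(L ⊓ suppSubgroup d c n) : Set ((Fin d → ℕ) × Fin c →₀ ℤ)) u := by
  refine ⟨hmem.1, (AddSubgroup.mem_inf).2 ⟨hmem.2, ?_⟩⟩
  exact AddSubgroup.sub_mem _ (mem_suppSubgroup.2 hu) (mem_suppSubgroup.2 hv)

end Aux

/-- Local bases assemble to global ones: if `B n` is a generating set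
(resp. Markov basis, resp. the Graver basis, resp. a Gröbner basis w.r.t. a compatible
term order) of the truncation `L_n = L ∩ ℤ^{(I_n)}` for all `n ≥ 1`, then `⋃ n, B n` is
such a basis of `L`. -/
theorem local_to_global_bases (d c : ℕ) (hd : 0 < d) (hc : 0 < c)
    (L : AddSubgroup ((Fin d → ℕ) × Fin c →₀ ℤ))
    (B : ℕ → Set ((Fin d → ℕ) × Fin c →₀ ℤ)) :
    ((∀ n, 1 ≤ n → AddSubgroup.closure (B n) = L ⊓ suppSubgroup d c n) →
        AddSubgroup.closure (⋃ (n : ℕ) (_ : 1 ≤ n), B n) = L) ∧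
    ((∀ n, 1 ≤ n → B n ⊆ (↑(L ⊓ suppSubgroup d c n) : Set ((Fin d → ℕ) × Fin c →₀ ℤ)) ∧
          IsMarkovBasis (↑(L ⊓ suppSubgroup d c n) : Set ((Fin d → ℕ) × Fin c →₀ ℤ)) (B n)) →
        IsMarkovBasis (L : Set ((Fin d → ℕ) × Fin c →₀ ℤ)) (⋃ (n : ℕ) (_ : 1 ≤ n), B n)) ∧
    ((∀ n, 1 ≤ n →
          B n = GraverBasis (↑(L ⊓ suppSubgroup d c n) : Set ((Fin d → ℕ) × Fin c →₀ ℤ))) →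
        (⋃ (n : ℕ) (_ : 1 ≤ n), B n) = GraverBasis (L : Set ((Fin d → ℕ) × Fin c →₀ ℤ))) ∧
    (∀ ord : TermOrderZ ((Fin d → ℕ) × Fin c),
      (∀ n, 1 ≤ n → B n ⊆ (↑(L ⊓ suppSubgroup d c n) : Set ((Fin d → ℕ) × Fin c →₀ ℤ)) ∧
          ∀ u, FsNonneg u → SuppIn d c n u →
            GroebnerPath (↑(L ⊓ suppSubgroup d c n) : Set ((Fin d → ℕ) × Fin c →₀ ℤ))
              ord.lt (B n) u) →
        IsGroebnerBasis (L : Set ((Fin d → ℕ) × Fin c →₀ ℤ)) ord.lt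
          (⋃ (n : ℕ) (_ : 1 ≤ n), B n)) := by
  constructor
  · -- generating sets
    intro h
    apply le_antisymm
    · rw [AddSubgroup.closure_le]
      intro b hb
      simp only [Set.mem_iUnion] at hb
      obtain ⟨n, hn, hbn⟩ := hb
      have : b ∈ AddSubgroup.closure (B n) := AddSubgroup.subset_closure hbn
      rw [h n hn] at this
      exact ((AddSubgroup.mem_inf).1 this).1
    · intro u hu
      have hn1 := one_le_nbound u
      have hsupp := suppIn_nbound u
      have humem : u ∈ AddSubgroup.closure (B (nbound u)) := by
        rw [h (nbound u) hn1]
        exact (AddSubgroup.mem_inf).2 ⟨hu, mem_suppSubgroup.2 hsupp⟩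
      refine AddSubgroup.closure_mono ?_ humem
      intro x hx
      simp only [Set.mem_iUnion]
      exact ⟨nbound u, hn1, hx⟩
  refine ⟨?_, ?_, ?_⟩
  · -- Markov bases
    intro h u hu v hv w hw
    set n := max (max (nbound u) (nbound v)) (nbound w) with hn
    have hn1 : 1 ≤ n := le_trans (one_le_nbound u) (le_trans (le_max_left _ _) (le_max_left _ _))
    have hsu : SuppIn d c n u :=
      suppIn_mono (le_trans (le_max_left _ _) (le_max_left _ _)) (suppIn_nbound u)
    have hsv : SuppIn d c n v :=
      suppIn_mono (le_trans (le_max_right _ _) (le_max_left _ _)) (suppIn_nbound v)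
    have hsw : SuppIn d c n w := suppIn_mono (le_max_right _ _) (suppIn_nbound w)
    have hconn := (h n hn1).2 u hu v (mem_latFiber_trunc hsu hsv hv) w (mem_latFiber_trunc hsu hsw hw)
    refine Relation.ReflTransGen.mono ?_ _ _ hconn
    rintro x y ⟨hx, hy, hxy⟩
    refine ⟨latFiber_subset L n u hx, latFiber_subset L n u hy, ?_⟩
    rcases hxy with h1 | h1
    · exact Or.inl (Set.mem_iUnion.2 ⟨n, Set.mem_iUnion.2 ⟨hn1, h1⟩⟩)
    · exact Or.inr (Set.mem_iUnion.2 ⟨n, Set.mem_iUnion.2 ⟨hn1, h1⟩⟩)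
  · -- Graver bases
    intro h
    apply Set.Subset.antisymm
    · intro u hu
      simp only [Set.mem_iUnion] at hu
      obtain ⟨n, hn1, hun⟩ := hu
      rw [h n hn1] at hun
      obtain ⟨huL, hu0, hmin⟩ := hun
      have huL' := (AddSubgroup.mem_inf).1 huL
      refine ⟨huL'.1, hu0, ?_⟩
      intro v hvL hv0 hsq
      have hsuppv : SuppIn d c n v := by
        intro p hp k
        have habs := (hsq p).2
        have hup : u p ≠ 0 := by
          intro h0
          rw [h0] at habs
          simp only [abs_zero] at habs
          exact hp (abs_eq_zero.1 (le_antisymm habs (abs_nonneg _)))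
        exact huL'.2 p hup k
      exact hmin v ((AddSubgroup.mem_inf).2 ⟨hvL, mem_suppSubgroup.2 hsuppv⟩) hv0 hsq
    · intro u hu
      obtain ⟨huL, hu0, hmin⟩ := hu
      have hn1 := one_le_nbound u
      have hsupp := suppIn_nbound u
      simp only [Set.mem_iUnion]
      refine ⟨nbound u, hn1, ?_⟩
      rw [h (nbound u) hn1]
      refine ⟨(AddSubgroup.mem_inf).2 ⟨huL, mem_suppSubgroup.2 hsupp⟩, hu0, ?_⟩
      intro v hvL hv0 hsq
      exact hmin v ((AddSubgroup.mem_inf).1 hvL).1 hv0 hsq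
  · -- Groebner bases
    intro ord h u hu
    have humem : u ∈ latFiber (L : Set ((Fin d → ℕ) × Fin c →₀ ℤ)) u :=
      ⟨hu, by simpa using L.zero_mem⟩
    obtain ⟨m0, hm0mem, hm0min⟩ := ord.min_exists (latFiber (L : Set _) u)
      (fun x hx => hx.1) ⟨u, humem⟩
    set n := max (nbound u) (nbound m0) with hn
    have hn1 : 1 ≤ n := le_trans (one_le_nbound u) (le_max_left _ _)
    have hsu : SuppIn d c n u := suppIn_mono (le_max_left _ _) (suppIn_nbound u)
    have hsm : SuppIn d c n m0 := suppIn_mono (le_max_right _ _) (suppIn_nbound m0)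
    obtain ⟨s, v, hv0, hfib, hstep, hmin⟩ := (h n hn1).2 u hu hsu
    have hvsL : v s ∈ latFiber (L : Set ((Fin d → ℕ) × Fin c →₀ ℤ)) u :=
      latFiber_subset L n u (hfib s le_rfl)
    have hvs : v s = m0 := by
      by_contra hne
      have hm0fib := mem_latFiber_trunc hsu hsm hm0mem
      have h1 : ord.lt (v s) m0 := hmin m0 hm0fib (fun h' => hne h'.symm)
      exact hm0min (v s) hvsL hne h1
    refine ⟨s, v, hv0, fun t ht => latFiber_subset L n u (hfib t ht), ?_, ?_⟩
    · intro t ht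
      refine ⟨(hstep t ht).1, ?_⟩
      rcases (hstep t ht).2 with h1 | h1
      · exact Or.inl (Set.mem_iUnion.2 ⟨n, Set.mem_iUnion.2 ⟨hn1, h1⟩⟩)
      · exact Or.inr (Set.mem_iUnion.2 ⟨n, Set.mem_iUnion.2 ⟨hn1, h1⟩⟩)
    · intro w hw hwne
      rw [hvs] at hwne ⊢
      rcases ord.total w m0 hw.1 hm0mem.1 hwne with h1 | h1
      · exact absurd h1 (hm0min w hw hwne)
      · exact h1
end

section
/- Let c, d be positive integers, I = ℕ^d × [c], I_n = [n]^d × [c], and let ≺ be a term order on ℤ_{≥0}^(I) with the property that for all u, v and all n, if u ≺ v and supp(v) ⊆ I_n then supp(u) ⊆ I_n (the lexicographic term order ≺_lex of the paper has this property). Let L ⊆ ℤ^(I) be a lattice with truncations L_n = L ∩ ℤ^(I_n) and let B ⊆ L. The following are equivalent: (i) B is a Gröbner basis of L with respect to ≺; (ii) for every n ≥ 1, B_n = B ∩ ℤ^(I_n) is a Gröbner basis of L_n with respect to the restriction of ≺. -/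
open Finsupp

/-- Let `≺` be a term order such that `u ≺ v` and `supp v ⊆ I_n` force
`supp u ⊆ I_n` (as for the lexicographic order). Then `B ⊆ L` is a Gröbner basis of `L`
w.r.t. `≺` iff for every `n ≥ 1`, `B ∩ ℤ^{(I_n)}` is a Gröbner basis of `L_n = L ∩ ℤ^{(I_n)}`
w.r.t. the restriction of `≺`. -/
theorem groebner_local_global (d c : ℕ) (hd : 0 < d) (hc : 0 < c)
    (ord : TermOrderZ ((Fin d → ℕ) × Fin c))
    (hord : ∀ u v (n : ℕ), FsNonneg u → FsNonneg v → ord.lt u v →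
      SuppIn d c n v → SuppIn d c n u)
    (L : AddSubgroup ((Fin d → ℕ) × Fin c →₀ ℤ))
    (B : Set ((Fin d → ℕ) × Fin c →₀ ℤ))
    (hB : B ⊆ (L : Set ((Fin d → ℕ) × Fin c →₀ ℤ))) :
    IsGroebnerBasis (L : Set ((Fin d → ℕ) × Fin c →₀ ℤ)) ord.lt B ↔
      ∀ n, 1 ≤ n → ∀ u, FsNonneg u → SuppIn d c n u →
        GroebnerPath (↑(L ⊓ suppSubgroup d c n) : Set ((Fin d → ℕ) × Fin c →₀ ℤ))
          ord.lt (B ∩ {w | SuppIn d c n w}) u := by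
  have memS : ∀ (n : ℕ) (x : (Fin d → ℕ) × Fin c →₀ ℤ),
      x ∈ suppSubgroup d c n ↔ SuppIn d c n x := fun _ _ => Iff.rfl
  constructor
  · intro h n hn u hu hsu
    obtain ⟨s, v, hv0, hfib, hstep, hmin⟩ := h u hu
    -- every v t with t ≤ s has support in I_n
    have hsupp : ∀ t, t ≤ s → SuppIn d c n (v t) := by
      intro t
      induction t with
      | zero => intro _; rw [hv0]; exact hsu
      | succ k ih =>
        intro hk
        have hk' : k < s := Nat.lt_of_succ_le hk
        have h1 := (hstep k hk').1
        exact hord _ _ n (hfib (k+1) hk).1 (hfib k hk'.le).1 h1 (ih hk'.le)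
    refine ⟨s, v, hv0, ?_, ?_, ?_⟩
    · intro t ht
      refine ⟨(hfib t ht).1, ?_⟩
      rw [SetLike.mem_coe, AddSubgroup.mem_inf]
      refine ⟨(hfib t ht).2, ?_⟩
      exact AddSubgroup.sub_mem _ ((memS n u).2 hsu) ((memS n (v t)).2 (hsupp t ht))
    · intro t ht
      have hd1 : SuppIn d c n (v t - v (t+1)) :=
        (memS n _).1 (AddSubgroup.sub_mem _ ((memS n _).2 (hsupp t ht.le))
          ((memS n _).2 (hsupp (t+1) ht)))
      have hd2 : SuppIn d c n (v (t+1) - v t) :=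
        (memS n _).1 (AddSubgroup.sub_mem _ ((memS n _).2 (hsupp (t+1) ht))
          ((memS n _).2 (hsupp t ht.le)))
      refine ⟨(hstep t ht).1, ?_⟩
      rcases (hstep t ht).2 with hb | hb
      · exact Or.inl ⟨hb, hd1⟩
      · exact Or.inr ⟨hb, hd2⟩
    · intro w hw hwne
      refine hmin w ⟨hw.1, ?_⟩ hwne
      have := hw.2
      rw [SetLike.mem_coe, AddSubgroup.mem_inf] at this
      exact this.1
  · intro h u hu
    set n : ℕ := (u.support.sup fun p => Finset.univ.sup p.1) + 1 with hn
    have hsu : SuppIn d c n u := by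
      intro p hp k
      have hmem : p ∈ u.support := Finsupp.mem_support_iff.2 hp
      have h1 : p.1 k ≤ Finset.univ.sup p.1 := Finset.le_sup (Finset.mem_univ k)
      have h2 : Finset.univ.sup p.1 ≤ u.support.sup fun p => Finset.univ.sup p.1 :=
        Finset.le_sup (f := fun p : (Fin d → ℕ) × Fin c => Finset.univ.sup p.1) hmem
      omega
    obtain ⟨s, v, hv0, hfib, hstep, hmin⟩ := h n (Nat.le_add_left 1 _) u hu hsu
    have hfibL : ∀ t, t ≤ s → v t ∈ latFiber (L : Set _) u := by
      intro t ht
      refine ⟨(hfib t ht).1, ?_⟩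
      have := (hfib t ht).2
      rw [SetLike.mem_coe, AddSubgroup.mem_inf] at this
      exact this.1
    refine ⟨s, v, hv0, hfibL, ?_, ?_⟩
    · intro t ht
      refine ⟨(hstep t ht).1, ?_⟩
      rcases (hstep t ht).2 with hb | hb
      · exact Or.inl hb.1
      · exact Or.inr hb.1
    · intro w hw hwne
      have hvs : v s ∈ latFiber (L : Set _) u := hfibL s le_rfl
      have hvsn : FsNonneg (v s) := hvs.1
      have hwn : FsNonneg w := hw.1
      rcases ord.total (v s) w hvsn hwn (fun e => hwne e.symm) with h1 | h1
      · exact h1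
      · -- w ≺ v s : then supp w ⊆ I_n, so w is in the small fiber, contradiction
        exfalso
        have hvss : SuppIn d c n (v s) := by
          have := (hfib s le_rfl).2
          rw [SetLike.mem_coe, AddSubgroup.mem_inf] at this
          have : u - (u - v s) ∈ suppSubgroup d c n :=
            AddSubgroup.sub_mem _ ((memS n u).2 hsu) this.2
          simpa using (memS n _).1 (by simpa using this)
        have hws : SuppIn d c n w := hord w (v s) n hwn hvsn h1 hvss
        have hwfib : w ∈ latFiber (↑(L ⊓ suppSubgroup d c n) : Set _) u := by
          refine ⟨hwn, ?_⟩
          rw [SetLike.mem_coe, AddSubgroup.mem_inf]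
          exact ⟨hw.2, AddSubgroup.sub_mem _ ((memS n u).2 hsu) ((memS n w).2 hws)⟩
        have h2 := hmin w hwfib hwne
        exact ord.irrefl w hwn (ord.trans w (v s) w hwn hvsn hwn h1 h2)
end

section
/- Let c, d be positive integers, I = ℕ^d × [c], I_n = [n]^d × [c]. Let M ⊆ ℤ_{≥0}^(I) be a submonoid with truncations M_n = M ∩ ℤ^(I_n), let H ⊆ M, and set H_n = H ∩ M_n for n ≥ 1. The following are equivalent: (i) H is the Hilbert basis of M; (ii) for every n ≥ 1, H_n is the Hilbert basis of M_n. -/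
open Finsupp

section Aux

variable {I : Type*}

private lemma fsdeg_pos (u : I →₀ ℤ) (hu : FsNonneg u) (h0 : u ≠ 0) :
    1 ≤ u.sum fun _ z => z := by
  obtain ⟨i, hi⟩ : ∃ i, u i ≠ 0 := by
    by_contra h
    push_neg at h
    exact h0 (Finsupp.ext h)
  have hmem : i ∈ u.support := Finsupp.mem_support_iff.2 hi
  have h1 : 1 ≤ u i := lt_of_le_of_ne (hu i) (Ne.symm hi)
  calc (1 : ℤ) ≤ u i := h1
    _ ≤ u.sum fun _ z => z :=
      Finset.single_le_sum (fun j _ => hu j) hmem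

private lemma mem_closure_irred (M : AddSubmonoid (I →₀ ℤ)) (hM : ∀ u ∈ M, FsNonneg u) :
    ∀ u ∈ M, u ∈ AddSubmonoid.closure {x | IsIrredElem (M : Set (I →₀ ℤ)) x} := by
  intro u hu
  generalize hn : (u.sum fun _ z => z).toNat = n
  induction n using Nat.strong_induction_on generalizing u with
  | _ n ih =>
    by_cases h0 : u = 0
    · subst h0; exact zero_mem _
    by_cases hirr : IsIrredElem (M : Set (I →₀ ℤ)) u
    · exact AddSubmonoid.subset_closure hirr
    · have : ∃ v ∈ (M : Set (I →₀ ℤ)), ∃ w ∈ (M : Set (I →₀ ℤ)), u = v + w ∧ v ≠ 0 ∧ w ≠ 0 := by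
        by_contra hcon
        push_neg at hcon
        exact hirr ⟨hu, h0, fun v hv w hw huvw => by
          by_contra hvw
          push_neg at hvw
          exact hvw.2 (hcon v hv w hw huvw hvw.1)⟩
      obtain ⟨v, hv, w, hw, huvw, hv0, hw0⟩ := this
      have hdv : 1 ≤ v.sum fun _ z => z := fsdeg_pos v (hM v hv) hv0
      have hdw : 1 ≤ w.sum fun _ z => z := fsdeg_pos w (hM w hw) hw0
      have hadd : (u.sum fun _ z => z) = (v.sum fun _ z => z) + (w.sum fun _ z => z) := by
        rw [huvw]; exact Finsupp.sum_add_index' (fun _ => rfl) (fun _ _ _ => rfl)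
      have hvlt : (v.sum fun _ z => z).toNat < n := by omega
      have hwlt : (w.sum fun _ z => z).toNat < n := by omega
      rw [huvw]
      exact add_mem (ih _ hvlt v hv rfl) (ih _ hwlt w hw rfl)

private lemma irred_mem_of_gen (M : AddSubmonoid (I →₀ ℤ))
    (A : Set (I →₀ ℤ)) (hA : A ⊆ (M : Set (I →₀ ℤ))) {u} (hu : u ∈ AddSubmonoid.closure A)
    (hirr : IsIrredElem (M : Set (I →₀ ℤ)) u) : u ∈ A := by
  have key : ∀ x ∈ AddSubmonoid.closure A,
      x ∈ M ∧ (IsIrredElem (M : Set (I →₀ ℤ)) x → x ∈ A) := by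
    intro x hx
    induction hx using AddSubmonoid.closure_induction with
    | mem y hy => exact ⟨hA hy, fun _ => hy⟩
    | zero => exact ⟨zero_mem M, fun h => absurd rfl h.2.1⟩
    | add x y hx hy px py =>
      refine ⟨add_mem px.1 py.1, fun h => ?_⟩
      rcases h.2.2 x px.1 y py.1 rfl with h0 | h0
      · subst h0; rw [zero_add] at h ⊢; exact py.2 h
      · subst h0; rw [add_zero] at h ⊢; exact px.2 h
  exact (key u hu).2 hirr

private lemma hilbert_iff_irred (M : AddSubmonoid (I →₀ ℤ)) (hM : ∀ u ∈ M, FsNonneg u)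
    (H : Set (I →₀ ℤ)) :
    IsHilbertBasis (M : Set (I →₀ ℤ)) H ↔
      H = {u | IsIrredElem (M : Set (I →₀ ℤ)) u} := by
  have hclos : AddSubmonoid.closure {u | IsIrredElem (M : Set (I →₀ ℤ)) u} = M :=
    le_antisymm (AddSubmonoid.closure_le.2 fun x hx => hx.1)
      (fun u hu => mem_closure_irred M hM u hu)
  constructor
  · rintro ⟨hHM, hgen, hmin⟩
    apply Set.Subset.antisymm
    · exact hmin _ (fun x hx => hx.1) (by rw [hclos])
    · intro u hu
      exact irred_mem_of_gen M H hHM (by rw [← SetLike.mem_coe, hgen]; exact hu.1) hu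
  · rintro rfl
    refine ⟨fun x hx => hx.1, by rw [hclos], fun A hA hgenA u hu => ?_⟩
    exact irred_mem_of_gen M A hA
      (by rw [← SetLike.mem_coe, hgenA]; exact hu.1) hu

end Aux

section Spec

variable {d c : ℕ}

private lemma mem_Mn_iff (n : ℕ) (M : AddSubmonoid ((Fin d → ℕ) × Fin c →₀ ℤ))
    (u : (Fin d → ℕ) × Fin c →₀ ℤ) :
    u ∈ (↑(M ⊓ (suppSubgroup d c n).toAddSubmonoid) :
        Set ((Fin d → ℕ) × Fin c →₀ ℤ)) ↔ u ∈ M ∧ SuppIn d c n u := by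
  simp only [SetLike.mem_coe, AddSubmonoid.mem_inf, AddSubgroup.mem_toAddSubmonoid]
  rfl

private lemma suppIn_of_add (n : ℕ) {u v w : (Fin d → ℕ) × Fin c →₀ ℤ}
    (hu : SuppIn d c n u) (hv : FsNonneg v) (hw : FsNonneg w) (huvw : u = v + w) :
    SuppIn d c n v := by
  intro p hp k
  apply hu p _ k
  have : u p = v p + w p := by rw [huvw]; rfl
  have h1 := hv p
  have h2 := hw p
  omega

private lemma irred_inf (n : ℕ) (M : AddSubmonoid ((Fin d → ℕ) × Fin c →₀ ℤ))
    (hM : ∀ u ∈ M, FsNonneg u) :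
    {u | IsIrredElem (↑(M ⊓ (suppSubgroup d c n).toAddSubmonoid) :
          Set ((Fin d → ℕ) × Fin c →₀ ℤ)) u} =
      {u | IsIrredElem (M : Set ((Fin d → ℕ) × Fin c →₀ ℤ)) u} ∩
        ↑(M ⊓ (suppSubgroup d c n).toAddSubmonoid) := by
  ext u
  simp only [Set.mem_setOf_eq, Set.mem_inter_iff, IsIrredElem]
  constructor
  · rintro ⟨huM, hu0, hirr⟩
    have huMn := (mem_Mn_iff n M u).1 huM
    refine ⟨⟨huMn.1, hu0, fun v hv w hw huvw => ?_⟩, huM⟩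
    have hvn : SuppIn d c n v := suppIn_of_add n huMn.2 (hM v hv) (hM w hw) huvw
    have hwn : SuppIn d c n w :=
      suppIn_of_add n huMn.2 (hM w hw) (hM v hv) (by rw [huvw, add_comm])
    exact hirr v ((mem_Mn_iff n M v).2 ⟨hv, hvn⟩) w ((mem_Mn_iff n M w).2 ⟨hw, hwn⟩) huvw
  · rintro ⟨⟨huM, hu0, hirr⟩, huMn⟩
    exact ⟨huMn, hu0, fun v hv w hw huvw =>
      hirr v ((mem_Mn_iff n M v).1 hv).1 w ((mem_Mn_iff n M w).1 hw).1 huvw⟩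

private lemma exists_suppIn (u : (Fin d → ℕ) × Fin c →₀ ℤ) :
    ∃ n, 1 ≤ n ∧ SuppIn d c n u := by
  refine ⟨u.support.sup (fun p => Finset.univ.sup p.1) + 1, by omega, ?_⟩
  intro p hp k
  have hmem : p ∈ u.support := Finsupp.mem_support_iff.2 hp
  have h1 : p.1 k ≤ Finset.univ.sup p.1 := Finset.le_sup (Finset.mem_univ k)
  have h2 : Finset.univ.sup p.1 ≤ u.support.sup (fun p => Finset.univ.sup p.1) :=
    Finset.le_sup (f := fun p => Finset.univ.sup p.1) hmem
  omega

end Spec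

/-- For a submonoid `M ⊆ ℤ_{≥0}^{(ℕ^d × [c])}` with truncations
`M_n = M ∩ ℤ^{(I_n)}` and `H ⊆ M` with `H_n = H ∩ M_n`: `H` is the Hilbert basis of `M`
iff `H_n` is the Hilbert basis of `M_n` for every `n ≥ 1`. -/
theorem hilbert_local_global (d c : ℕ) (hd : 0 < d) (hc : 0 < c)
    (M : AddSubmonoid ((Fin d → ℕ) × Fin c →₀ ℤ)) (hM : ∀ u ∈ M, FsNonneg u)
    (H : Set ((Fin d → ℕ) × Fin c →₀ ℤ))
    (hH : H ⊆ (M : Set ((Fin d → ℕ) × Fin c →₀ ℤ))) :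
    IsHilbertBasis (M : Set ((Fin d → ℕ) × Fin c →₀ ℤ)) H ↔
      ∀ n, 1 ≤ n →
        IsHilbertBasis
          (↑(M ⊓ (suppSubgroup d c n).toAddSubmonoid) : Set ((Fin d → ℕ) × Fin c →₀ ℤ))
          (H ∩ ↑(M ⊓ (suppSubgroup d c n).toAddSubmonoid)) := by
  constructor
  · intro h n hn
    rw [hilbert_iff_irred _ hM] at h
    rw [hilbert_iff_irred _ (fun u hu => hM u ((mem_Mn_iff n M u).1 hu).1)]
    rw [irred_inf n M hM, ← h]
  · intro h
    have hirr : ∀ n, 1 ≤ n →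
        H ∩ ↑(M ⊓ (suppSubgroup d c n).toAddSubmonoid) =
          {u | IsIrredElem (M : Set ((Fin d → ℕ) × Fin c →₀ ℤ)) u} ∩
            ↑(M ⊓ (suppSubgroup d c n).toAddSubmonoid) := by
      intro n hn
      have := (hilbert_iff_irred _ (fun u hu => hM u ((mem_Mn_iff n M u).1 hu).1) _).1 (h n hn)
      rw [this, irred_inf n M hM]
    rw [hilbert_iff_irred _ hM]
    ext u
    constructor
    · intro hu
      obtain ⟨n, hn, hsupp⟩ := exists_suppIn u
      have huMn : u ∈ (↑(M ⊓ (suppSubgroup d c n).toAddSubmonoid) :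
          Set ((Fin d → ℕ) × Fin c →₀ ℤ)) := (mem_Mn_iff n M u).2 ⟨hH hu, hsupp⟩
      have := (hirr n hn) ▸ (Set.mem_inter hu huMn)
      exact this.1
    · intro hu
      obtain ⟨n, hn, hsupp⟩ := exists_suppIn u
      have huMn : u ∈ (↑(M ⊓ (suppSubgroup d c n).toAddSubmonoid) :
          Set ((Fin d → ℕ) × Fin c →₀ ℤ)) := (mem_Mn_iff n M u).2 ⟨hu.1, hsupp⟩
      have := (hirr n hn).symm ▸ (Set.mem_inter hu huMn)
      exact this.1
end

section
/- Let c, d be positive integers, I = ℕ^d × [c], I_n = [n]^d × [c], and let (L_n)_{n≥1} be a Sym-invariant chain of lattices with limit L = ∪_{n≥1} L_n. The following are equivalent: (i) the chain Graver-stabilizes, i.e. there exist p ∈ ℕ and a subset B_p ⊆ L_p such that for every n ≥ p, Sym(n)(B_p) equals the Graver basis of L_n; (ii) there exist q, q' ∈ ℕ such that for all n ≥ q: (a) L_n = L ∩ ℤ^(I_n), and (b) every element of the Graver basis of L_n has support size at most q'; (iii) L has a finite equivariant Graver basis, i.e. a finite B ⊆ L such that Sym(B) equals the Graver basis of L. 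-/
/-!
Everything rests on two properties of the conformal order `⊑`. It is well founded (the
`ℓ¹`-norm drops strictly), so every nonzero vector `u` of a lattice lies above a Graver
element `v ⊑ u`, and `u - v ⊑ u` is again in the lattice, of smaller norm. On vectors supported
in a fixed finite box it is moreover a well-quasi-order (Dickson's lemma), so Graver bases of the
`L_n` are finite antichains.

(i) ⇒ (iii): the sets `Sym(n)(B_p)` grow with `n`, so a Graver element of `L_n` stays minimal
in every `L_N`, hence in `L`; and `B_p`, an antichain in `ℤ^(I_p)`, is finite.
(iii) ⇒ (ii): once `B ⊆ L_r`, repeatedly peeling off Graver elements shows that every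
`u ∈ L ∩ ℤ^(I_n)` lies in `L_n`, because a translate `σ·b` (`b ∈ B`) supported in `I_n` is
already a `Sym(n)`-translate of `b`; the support sizes are those of `B`.
(ii) ⇒ (i): a Graver element of `L_n` involves at most `q' d` indices, so `Sym(n)` moves it into
`I_{q' d}`; hence for `p ≥ q' d` one can take for `B_p` the Graver elements of `L` supported
in `I_p`.
-/

open Finsupp

open Finset

section Conformal

variable {I : Type*}

theorem Int.mul_nonneg_and_abs_le_iff {a b : ℤ} :
    0 ≤ a * b ∧ |a| ≤ |b| ↔ 0 ≤ a ∧ a ≤ b ∨ b ≤ a ∧ a ≤ 0 := by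
  rw [mul_nonneg_iff, abs_eq_max_neg, abs_eq_max_neg]
  omega

theorem sqle_iff {u v : I →₀ ℤ} : Sqle u v ↔ ∀ i, 0 ≤ u i ∧ u i ≤ v i ∨ v i ≤ u i ∧ u i ≤ 0 :=
  forall_congr' fun _ => Int.mul_nonneg_and_abs_le_iff

theorem Sqle.refl (u : I →₀ ℤ) : Sqle u u :=
  sqle_iff.2 fun i => by omega

theorem Sqle.trans {u v w : I →₀ ℤ} (huv : Sqle u v) (hvw : Sqle v w) : Sqle u w :=
  sqle_iff.2 fun i => by have := sqle_iff.1 huv i; have := sqle_iff.1 hvw i; omega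

theorem Sqle.support_subset {u v : I →₀ ℤ} (h : Sqle u v) : u.support ⊆ v.support := by
  intro i
  simp only [Finsupp.mem_support_iff]
  have := sqle_iff.1 h i
  omega

theorem sqle_equivMapDomain {J : Type*} (e : I ≃ J) {u v : I →₀ ℤ} (h : Sqle u v) :
    Sqle (Finsupp.equivMapDomain e u) (Finsupp.equivMapDomain e v) :=
  fun j => h (e.symm j)

def l1Norm (u : I →₀ ℤ) : ℕ := u.sum fun _ z => z.natAbs

theorem l1Norm_eq_sum {u : I →₀ ℤ} {s : Finset I} (h : u.support ⊆ s) :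
    l1Norm u = ∑ i ∈ s, (u i).natAbs :=
  Finsupp.sum_of_support_subset u h _ fun _ _ => Int.natAbs_zero

theorem l1Norm_eq_zero {u : I →₀ ℤ} : l1Norm u = 0 ↔ u = 0 := by
  simp [l1Norm_eq_sum subset_rfl, Finset.sum_eq_zero_iff, Finsupp.ext_iff]

theorem Sqle.l1Norm_sub_add {u v : I →₀ ℤ} (h : Sqle v u) :
    l1Norm (u - v) + l1Norm v = l1Norm u := by
  classical
  have hsub : (u - v).support ⊆ u.support :=
    Finsupp.support_sub.trans (Finset.union_subset subset_rfl h.support_subset)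
  rw [l1Norm_eq_sum hsub, l1Norm_eq_sum h.support_subset, l1Norm_eq_sum subset_rfl,
    ← Finset.sum_add_distrib]
  refine Finset.sum_congr rfl fun i _ => ?_
  have := sqle_iff.1 h i
  rw [Finsupp.sub_apply]
  omega

theorem Sqle.l1Norm_sub_lt {u v : I →₀ ℤ} (h : Sqle v u) (hv : v ≠ 0) :
    l1Norm (u - v) < l1Norm u := by
  have := h.l1Norm_sub_add
  have := mt l1Norm_eq_zero.1 hv
  omega

theorem Sqle.l1Norm_lt {u v : I →₀ ℤ} (h : Sqle v u) (hne : v ≠ u) : l1Norm v < l1Norm u := by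
  have := h.l1Norm_sub_add
  have := mt l1Norm_eq_zero.1 (sub_ne_zero.2 hne.symm)
  omega

theorem exists_mem_graverBasis_sqle {T : Set (I →₀ ℤ)} {u : I →₀ ℤ} (hu : u ∈ T) (h0 : u ≠ 0) :
    ∃ v ∈ GraverBasis T, Sqle v u := by
  induction hn : l1Norm u using Nat.strong_induction_on generalizing u with
  | _ n ih =>
  by_cases hmin : u ∈ GraverBasis T
  · exact ⟨u, hmin, Sqle.refl u⟩
  obtain ⟨v, hvT, hv0, hvu, hne⟩ : ∃ v ∈ T, v ≠ 0 ∧ Sqle v u ∧ v ≠ u := by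
    simpa [GraverBasis, hu, h0] using hmin
  obtain ⟨w, hw, hwv⟩ := ih _ (hn ▸ hvu.l1Norm_lt hne) hvT hv0 rfl
  exact ⟨w, hw, hwv.trans hvu⟩

theorem graverBasis_isAntichain (T : Set (I →₀ ℤ)) : IsAntichain Sqle (GraverBasis T) :=
  fun u hu _ hv hne h => hne (hv.2.2 u hu.1 hu.2.1 h)

theorem mem_graverBasis_of_subset {S T : Set (I →₀ ℤ)} (hST : S ⊆ T) {u : I →₀ ℤ} (huS : u ∈ S)
    (hu : u ∈ GraverBasis T) : u ∈ GraverBasis S :=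
  ⟨huS, hu.2.1, fun v hv => hu.2.2 v (hST hv)⟩

theorem graverBasis_inter_of_sqle_closed {T P : Set (I →₀ ℤ)}
    (hP : ∀ ⦃u v⦄, Sqle v u → u ∈ P → v ∈ P) : GraverBasis (T ∩ P) = GraverBasis T ∩ P := by
  ext u
  constructor
  · rintro ⟨⟨huT, huP⟩, hu0, hmin⟩
    exact ⟨⟨huT, hu0, fun v hvT hv0 hvu => hmin v ⟨hvT, hP hvu huP⟩ hv0 hvu⟩, huP⟩
  · rintro ⟨hu, huP⟩
    exact mem_graverBasis_of_subset Set.inter_subset_left ⟨hu.1, huP⟩ hu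

theorem equivMapDomain_mem_graverBasis {T : Set (I →₀ ℤ)} (e : I ≃ I)
    (he : ∀ u ∈ T, Finsupp.equivMapDomain e u ∈ T)
    (he' : ∀ u ∈ T, Finsupp.equivMapDomain e.symm u ∈ T) {u : I →₀ ℤ}
    (hu : u ∈ GraverBasis T) : Finsupp.equivMapDomain e u ∈ GraverBasis T := by
  obtain ⟨huT, hu0, hmin⟩ := hu
  refine ⟨he u huT, fun h => hu0 ?_, fun v hvT hv0 hvu => ?_⟩
  · simpa [← Finsupp.equivMapDomain_trans] using congrArg (Finsupp.equivMapDomain e.symm) h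
  · have hv : Finsupp.equivMapDomain e.symm v = u := by
      refine hmin _ (he' v hvT) (fun h => hv0 ?_) ?_
      · simpa [← Finsupp.equivMapDomain_trans] using congrArg (Finsupp.equivMapDomain e) h
      · simpa [← Finsupp.equivMapDomain_trans] using sqle_equivMapDomain e.symm hvu
    simp [← hv, ← Finsupp.equivMapDomain_trans]

theorem partiallyWellOrderedOn_sqle {J : Set I} (hJ : J.Finite) :
    {u : I →₀ ℤ | ↑u.support ⊆ J}.PartiallyWellOrderedOn Sqle := by
  have := hJ.to_subtype
  rw [Set.partiallyWellOrderedOn_iff_exists_lt]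
  intro f hf
  -- `u ⊑ v` iff `u⁺ ≤ v⁺` and `u⁻ ≤ v⁻`, so Dickson's lemma on `J × Bool → ℕ` applies
  obtain ⟨m, n, hmn, hle⟩ :=
    wellQuasiOrdered_le fun m (j : J × Bool) => (if j.2 then f m j.1 else -f m j.1).toNat
  refine ⟨m, n, hmn, sqle_iff.2 fun i => ?_⟩
  by_cases hi : i ∈ J
  · have h1 := hle (⟨i, hi⟩, true)
    have h2 := hle (⟨i, hi⟩, false)
    simp only [if_true, Bool.false_eq_true, if_false] at h1 h2
    omega
  · have hm : f m i = 0 := Finsupp.notMem_support_iff.1 fun h => hi (hf m h)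
    omega

end Conformal

section Chain

variable {M : Type*} [AddGroup M]

def chainLimit (L : ℕ → AddSubgroup M) : Set M := {u | ∃ m, 1 ≤ m ∧ u ∈ L m}

theorem coe_subset_chainLimit {L : ℕ → AddSubgroup M} {n : ℕ} (hn : 1 ≤ n) :
    (L n : Set M) ⊆ chainLimit L :=
  fun _ hu => ⟨n, hn, hu⟩

theorem sub_mem_chainLimit {L : ℕ → AddSubgroup M} (hmono : Monotone L) {u v : M}
    (hu : u ∈ chainLimit L) (hv : v ∈ chainLimit L) : u - v ∈ chainLimit L := by
  obtain ⟨m, hm, hum⟩ := hu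
  obtain ⟨m', -, hvm'⟩ := hv
  exact ⟨max m m', hm.trans (le_max_left _ _),
    sub_mem (hmono (le_max_left _ _) hum) (hmono (le_max_right _ _) hvm')⟩

theorem exists_subset_of_finset_subset_chainLimit {L : ℕ → AddSubgroup M} (hmono : Monotone L)
    (B : Finset M) (hB : ↑B ⊆ chainLimit L) : ∃ r, 1 ≤ r ∧ ↑B ⊆ (L r : Set M) := by
  have hev : ∀ᶠ r in Filter.atTop, 1 ≤ r ∧ ∀ b ∈ B, b ∈ L r := by
    refine (Filter.eventually_ge_atTop 1).and ((Filter.eventually_all_finset B).2 fun b hb => ?_)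
    obtain ⟨m, -, hbm⟩ := hB hb
    exact Filter.eventually_atTop.2 ⟨m, fun n hn => hmono hn hbm⟩
  obtain ⟨r, hr, hBr⟩ := hev.exists
  exact ⟨r, hr, hBr⟩

theorem mem_graverBasis_chainLimit {I : Type*} {L : ℕ → AddSubgroup (I →₀ ℤ)}
    (hmono : Monotone L) {n : ℕ} (hn : 1 ≤ n) {u : I →₀ ℤ}
    (hu : ∀ N, n ≤ N → u ∈ GraverBasis (L N : Set (I →₀ ℤ))) :
    u ∈ GraverBasis (chainLimit L) := by
  refine ⟨⟨n, hn, (hu n le_rfl).1⟩, (hu n le_rfl).2.1, fun v ⟨m, _, hvm⟩ hv0 hvu => ?_⟩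
  exact (hu _ (le_max_left n m)).2.2 v (hmono (le_max_right n m) hvm) hv0 hvu

end Chain

section SymmetricGroup

theorem InSymN.mono {m n : ℕ} {σ : Equiv.Perm ℕ} (h : m ≤ n) (hσ : InSymN m σ) : InSymN n σ :=
  fun i hi => hσ i (h.trans hi)

theorem InSymN.symm {n : ℕ} {σ : Equiv.Perm ℕ} (h : InSymN n σ) : InSymN n σ.symm :=
  fun i hi => σ.symm_apply_eq.2 (h i hi).symm

theorem InSymN.apply_lt {n : ℕ} {σ : Equiv.Perm ℕ} (h : InSymN n σ) {i : ℕ} (hi : i < n) :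
    σ i < n := by
  by_contra! hge
  exact hi.not_ge (σ.injective (h _ hge) ▸ hge)

theorem InSymN.isFinPerm {n : ℕ} {σ : Equiv.Perm ℕ} (h : InSymN n σ) : IsFinPerm σ :=
  (Set.finite_Iio n).subset fun i hi => not_le.1 fun hge => hi (h i hge)

theorem IsFinPerm.exists_inSymN {σ : Equiv.Perm ℕ} (h : IsFinPerm σ) : ∃ n, InSymN n σ := by
  obtain ⟨n, hn⟩ := h.bddAbove
  exact ⟨n + 1, fun i hi => by_contra fun hne => by have := hn hne; omega⟩

theorem exists_inSymN_eqOn {n : ℕ} {A : Finset ℕ} {f : ℕ → ℕ} (hA : ∀ a ∈ A, a < n)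
    (hf : ∀ a ∈ A, f a < n) (hinj : Set.InjOn f A) :
    ∃ τ : Equiv.Perm ℕ, InSymN n τ ∧ Set.EqOn τ f A := by
  classical
  obtain ⟨g, hg⟩ := Set.MapsTo.exists_equiv_extend_of_card_eq (α := range n) (t := range n)
    (Fintype.card_coe _) (s := {x | (x : ℕ) ∈ A}) (f := fun x => f x)
    (fun x hx => by simpa using hf x hx) (fun x hx y hy h => Subtype.ext (hinj hx hy h))
  refine ⟨Equiv.Perm.ofSubtype g, fun i hi => Equiv.Perm.ofSubtype_apply_of_not_mem g
    (by simpa using hi), fun a ha => ?_⟩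
  have ha' : a ∈ range n := mem_range.2 (hA a ha)
  rw [Equiv.Perm.ofSubtype_apply_of_mem g ha', hg ⟨a, ha'⟩ ha]

end SymmetricGroup

section PermAction

variable {d c : ℕ}

def permIndex (d c : ℕ) (σ : Equiv.Perm ℕ) : Equiv.Perm ((Fin d → ℕ) × Fin c) :=
  Equiv.prodCongr ((Equiv.refl (Fin d)).arrowCongr σ) (Equiv.refl (Fin c))

theorem support_permActd (σ : Equiv.Perm ℕ) (u : (Fin d → ℕ) × Fin c →₀ ℤ) :
    (permActd d c σ u).support = u.support.map (permIndex d c σ).toEmbedding := rfl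

theorem permActd_eq_equivMapDomain (σ : Equiv.Perm ℕ) (u : (Fin d → ℕ) × Fin c →₀ ℤ) :
    permActd d c σ u = Finsupp.equivMapDomain (permIndex d c σ) u := rfl

theorem permActd_apply_s17 (σ : Equiv.Perm ℕ) (u : (Fin d → ℕ) × Fin c →₀ ℤ)
    (x : (Fin d → ℕ) × Fin c) : permActd d c σ u x = u (σ.symm ∘ x.1, x.2) := rfl

theorem permActd_refl (u : (Fin d → ℕ) × Fin c →₀ ℤ) : permActd d c (Equiv.refl ℕ) u = u := by
  ext x
  rfl

theorem permActd_symm_permActd (σ : Equiv.Perm ℕ) (u : (Fin d → ℕ) × Fin c →₀ ℤ) :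
    permActd d c σ.symm (permActd d c σ u) = u := by
  ext x
  simp [permActd_apply_s17, Function.comp_def]

theorem card_support_permActd (σ : Equiv.Perm ℕ) (u : (Fin d → ℕ) × Fin c →₀ ℤ) :
    #(permActd d c σ u).support = #u.support := by
  rw [support_permActd, card_map]

def usedIndices (u : (Fin d → ℕ) × Fin c →₀ ℤ) : Finset ℕ :=
  u.support.biUnion fun x => univ.image x.1

theorem mem_usedIndices {u : (Fin d → ℕ) × Fin c →₀ ℤ} {i : ℕ} :
    i ∈ usedIndices u ↔ ∃ x ∈ u.support, ∃ k, x.1 k = i := by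
  simp [usedIndices]

theorem suppIn_iff_forall_mem_usedIndices {n : ℕ} {u : (Fin d → ℕ) × Fin c →₀ ℤ} :
    SuppIn d c n u ↔ ∀ i ∈ usedIndices u, i < n := by
  refine ⟨fun h i hi => ?_, fun h x hx k => h _ (mem_usedIndices.2 ⟨x, by simpa using hx, k, rfl⟩)⟩
  obtain ⟨x, hx, k, rfl⟩ := mem_usedIndices.1 hi
  exact h x (by simpa using hx) k

theorem card_usedIndices_le (u : (Fin d → ℕ) × Fin c →₀ ℤ) :
    #(usedIndices u) ≤ #u.support * d := by
  refine card_biUnion_le.trans ?_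
  simpa using Finset.sum_le_card_nsmul _ _ d fun x _ => card_image_le.trans (card_fin d).le

theorem usedIndices_permActd (σ : Equiv.Perm ℕ) (u : (Fin d → ℕ) × Fin c →₀ ℤ) :
    usedIndices (permActd d c σ u) = (usedIndices u).image σ := by
  classical
  ext i
  simp only [mem_usedIndices, support_permActd, mem_image]
  constructor
  · rintro ⟨_, hx, k, rfl⟩
    obtain ⟨y, hy, rfl⟩ := mem_map.1 hx
    exact ⟨_, ⟨y, hy, k, rfl⟩, rfl⟩
  · rintro ⟨_, ⟨y, hy, k, rfl⟩, rfl⟩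
    exact ⟨permIndex d c σ y, mem_map_of_mem _ hy, k, rfl⟩

theorem permActd_congr {σ τ : Equiv.Perm ℕ} {u : (Fin d → ℕ) × Fin c →₀ ℤ}
    (h : Set.EqOn σ τ (usedIndices u)) : permActd d c σ u = permActd d c τ u := by
  classical
  rw [permActd_eq_equivMapDomain, permActd_eq_equivMapDomain,
    Finsupp.equivMapDomain_eq_mapDomain, Finsupp.equivMapDomain_eq_mapDomain]
  exact Finsupp.mapDomain_congr fun x hx =>
    Prod.ext (funext fun k => h (mem_usedIndices.2 ⟨x, hx, k, rfl⟩)) rfl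

end PermAction

section Support

variable {d c : ℕ}

theorem SuppIn.mono {m n : ℕ} (h : m ≤ n) {u : (Fin d → ℕ) × Fin c →₀ ℤ}
    (hu : SuppIn d c m u) : SuppIn d c n u :=
  fun x hx k => (hu x hx k).trans_le h

theorem SuppIn.of_sqle {n : ℕ} {u v : (Fin d → ℕ) × Fin c →₀ ℤ} (h : Sqle v u)
    (hu : SuppIn d c n u) : SuppIn d c n v :=
  fun x hx k =>
    hu x (Finsupp.mem_support_iff.1 (h.support_subset (Finsupp.mem_support_iff.2 hx))) k

theorem SuppIn.permActd {n : ℕ} {σ : Equiv.Perm ℕ} {u : (Fin d → ℕ) × Fin c →₀ ℤ}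
    (hσ : InSymN n σ) (hu : SuppIn d c n u) : SuppIn d c n (permActd d c σ u) := by
  rw [suppIn_iff_forall_mem_usedIndices] at hu ⊢
  rw [usedIndices_permActd]
  simp only [mem_image, forall_exists_index, and_imp]
  rintro _ i hi rfl
  exact hσ.apply_lt (hu i hi)

theorem finite_of_isAntichain_of_suppIn {n : ℕ} {S : Set ((Fin d → ℕ) × Fin c →₀ ℤ)}
    (hS : IsAntichain Sqle S) (hSn : ∀ u ∈ S, SuppIn d c n u) : S.Finite := by
  have hbox : {x : (Fin d → ℕ) × Fin c | ∀ k, x.1 k < n}.Finite :=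
    ((Set.Finite.pi fun _ => Set.finite_Iio n).prod Set.finite_univ).subset
      fun x hx => ⟨fun k _ => hx k, trivial⟩
  exact hS.finite_of_partiallyWellOrderedOn ((partiallyWellOrderedOn_sqle hbox).mono
    fun u hu x hx => hSn u hu x (Finsupp.mem_support_iff.1 hx))

theorem exists_inSymN_permActd_eq {n : ℕ} {σ : Equiv.Perm ℕ} {b : (Fin d → ℕ) × Fin c →₀ ℤ}
    (hb : SuppIn d c n b) (hσb : SuppIn d c n (permActd d c σ b)) :
    ∃ τ, InSymN n τ ∧ permActd d c τ b = permActd d c σ b := by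
  rw [suppIn_iff_forall_mem_usedIndices] at hb hσb
  rw [usedIndices_permActd] at hσb
  obtain ⟨τ, hτ, hτσ⟩ := exists_inSymN_eqOn hb (fun a ha => hσb _ (mem_image_of_mem σ ha))
    σ.injective.injOn
  exact ⟨τ, hτ, permActd_congr hτσ⟩

theorem exists_inSymN_suppIn_of_card_le {n k : ℕ} {u : (Fin d → ℕ) × Fin c →₀ ℤ}
    (hu : SuppIn d c n u) (hcard : #u.support * d ≤ k) (hkn : k ≤ n) :
    ∃ σ, InSymN n σ ∧ SuppIn d c k (permActd d c σ u) := by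
  classical
  set A := usedIndices u
  obtain ⟨e⟩ : Nonempty (A ↪ Fin k) := Function.Embedding.nonempty_of_card_le
    (by simpa [A] using (card_usedIndices_le u).trans hcard)
  let f : ℕ → ℕ := fun a => if h : a ∈ A then e ⟨a, h⟩ else a
  have hfA : ∀ a ∈ A, f a < k := fun a ha => by simp [f, ha]
  have hinj : Set.InjOn f A := fun a ha b hb h => by
    rw [Finset.mem_coe] at ha hb
    simp only [f, dif_pos ha, dif_pos hb, Fin.val_inj] at h
    exact congrArg Subtype.val (e.injective h)
  obtain ⟨σ, hσ, hσf⟩ := exists_inSymN_eqOn (suppIn_iff_forall_mem_usedIndices.1 hu)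
    (fun a ha => (hfA a ha).trans_le hkn) hinj
  refine ⟨σ, hσ, suppIn_iff_forall_mem_usedIndices.2 ?_⟩
  rw [usedIndices_permActd]
  simp only [mem_image, forall_exists_index, and_imp]
  rintro _ a ha rfl
  exact hσf ha ▸ hfA a ha

end Support

section SymInvariantChain

variable {d c : ℕ} {L : ℕ → AddSubgroup ((Fin d → ℕ) × Fin c →₀ ℤ)}

theorem permActd_mem_chainLimit (hmono : Monotone L)
    (hinv : ∀ n σ, InSymN n σ → ∀ u ∈ L n, permActd d c σ u ∈ L n)
    {n : ℕ} {σ : Equiv.Perm ℕ} (hσ : InSymN n σ) {u : (Fin d → ℕ) × Fin c →₀ ℤ}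
    (hu : u ∈ chainLimit L) : permActd d c σ u ∈ chainLimit L := by
  obtain ⟨m, hm, hum⟩ := hu
  exact ⟨max m n, hm.trans (le_max_left _ _),
    hinv _ σ (hσ.mono (le_max_right _ _)) u (hmono (le_max_left _ _) hum)⟩

theorem permActd_mem_graverBasis_chainLimit (hmono : Monotone L)
    (hinv : ∀ n σ, InSymN n σ → ∀ u ∈ L n, permActd d c σ u ∈ L n)
    {n : ℕ} {σ : Equiv.Perm ℕ} (hσ : InSymN n σ) {u : (Fin d → ℕ) × Fin c →₀ ℤ}
    (hu : u ∈ GraverBasis (chainLimit L)) : permActd d c σ u ∈ GraverBasis (chainLimit L) :=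
  equivMapDomain_mem_graverBasis (permIndex d c σ)
    (fun _ => permActd_mem_chainLimit hmono hinv hσ)
    (fun _ => permActd_mem_chainLimit hmono hinv hσ.symm) hu

theorem mem_of_mem_chainLimit_of_suppIn (hsupp : ∀ n, ∀ u ∈ L n, SuppIn d c n u)
    (hmono : Monotone L) (hinv : ∀ n σ, InSymN n σ → ∀ u ∈ L n, permActd d c σ u ∈ L n)
    {r n : ℕ} {B : Set ((Fin d → ℕ) × Fin c →₀ ℤ)} (hBr : B ⊆ L r)
    (hB : GraverBasis (chainLimit L) ⊆ symOrbitd d c B) (hrn : r ≤ n)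
    {u : (Fin d → ℕ) × Fin c →₀ ℤ} (hu : u ∈ chainLimit L) (hun : SuppIn d c n u) :
    u ∈ L n := by
  induction hN : l1Norm u using Nat.strong_induction_on generalizing u with
  | _ N ih =>
  by_cases h0 : u = 0
  · exact h0 ▸ zero_mem _
  obtain ⟨v, hvG, hvu⟩ := exists_mem_graverBasis_sqle hu h0
  obtain ⟨σ, -, b, hbB, rfl⟩ := hB hvG
  have hvn := hun.of_sqle hvu
  obtain ⟨τ, hτ, hτb⟩ := exists_inSymN_permActd_eq ((hsupp r b (hBr hbB)).mono hrn) hvn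
  have hv : permActd d c σ b ∈ L n := hτb ▸ hinv n τ hτ b (hmono hrn (hBr hbB))
  have hrest : u - permActd d c σ b ∈ L n :=
    ih _ (hN ▸ hvu.l1Norm_sub_lt hvG.2.1) (sub_mem_chainLimit hmono hu hvG.1)
      ((suppSubgroup d c n).sub_mem hun hvn) rfl
  simpa using add_mem hrest hv

theorem graverBasis_eq_inter_of_saturated {n : ℕ}
    (hsat : (L n : Set ((Fin d → ℕ) × Fin c →₀ ℤ)) = chainLimit L ∩ {u | SuppIn d c n u}) :
    GraverBasis (L n : Set ((Fin d → ℕ) × Fin c →₀ ℤ)) =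
      GraverBasis (chainLimit L) ∩ {u | SuppIn d c n u} := by
  rw [hsat]
  exact graverBasis_inter_of_sqle_closed fun _ _ h hu => SuppIn.of_sqle h hu

end SymInvariantChain

section Stabilization

variable {d c : ℕ} {L : ℕ → AddSubgroup ((Fin d → ℕ) × Fin c →₀ ℤ)}

theorem graverBasis_subset_graverBasis_chainLimit (hmono : Monotone L) {p : ℕ} (hp : 1 ≤ p)
    {Bp : Set ((Fin d → ℕ) × Fin c →₀ ℤ)}
    (hstab : ∀ n, p ≤ n →
      symOrbitNd d c n Bp = GraverBasis (L n : Set ((Fin d → ℕ) × Fin c →₀ ℤ)))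
    {n : ℕ} (hn : p ≤ n) :
    GraverBasis (L n : Set ((Fin d → ℕ) × Fin c →₀ ℤ)) ⊆ GraverBasis (chainLimit L) := by
  intro u hu
  refine mem_graverBasis_chainLimit hmono (hp.trans hn) fun N hN => ?_
  rw [← hstab n hn] at hu
  rw [← hstab N (hn.trans hN)]
  obtain ⟨σ, hσ, b, hb, rfl⟩ := hu
  exact ⟨σ, hσ.mono hN, b, hb, rfl⟩

theorem exists_finset_symOrbitd_eq_graverBasis (hsupp : ∀ n, ∀ u ∈ L n, SuppIn d c n u)
    (hmono : Monotone L) (hinv : ∀ n σ, InSymN n σ → ∀ u ∈ L n, permActd d c σ u ∈ L n)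
    {p : ℕ} (hp : 1 ≤ p) {Bp : Set ((Fin d → ℕ) × Fin c →₀ ℤ)}
    (hstab : ∀ n, p ≤ n →
      symOrbitNd d c n Bp = GraverBasis (L n : Set ((Fin d → ℕ) × Fin c →₀ ℤ))) :
    ∃ B : Finset ((Fin d → ℕ) × Fin c →₀ ℤ),
      (↑B : Set ((Fin d → ℕ) × Fin c →₀ ℤ)) ⊆ chainLimit L ∧
        symOrbitd d c ↑B = GraverBasis (chainLimit L) := by
  have hBpG : Bp ⊆ GraverBasis (L p : Set ((Fin d → ℕ) × Fin c →₀ ℤ)) := fun b hb =>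
    hstab p le_rfl ▸ ⟨Equiv.refl ℕ, fun _ _ => rfl, b, hb, (permActd_refl b).symm⟩
  have hG n (hn : p ≤ n) := graverBasis_subset_graverBasis_chainLimit hmono hp hstab hn
  have hfin : Bp.Finite := finite_of_isAntichain_of_suppIn
    ((graverBasis_isAntichain _).subset hBpG) fun u hu => hsupp p u (hBpG hu).1
  refine ⟨hfin.toFinset, fun b hb =>
    (hG p le_rfl (hBpG (hfin.mem_toFinset.1 hb))).1, ?_⟩
  rw [hfin.coe_toFinset]
  ext w
  constructor
  · rintro ⟨σ, hσ, b, hb, rfl⟩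
    obtain ⟨n, hn⟩ := hσ.exists_inSymN
    exact permActd_mem_graverBasis_chainLimit hmono hinv hn (hG p le_rfl (hBpG hb))
  · intro hw
    obtain ⟨m, -, hwm⟩ := hw.1
    have hwN : w ∈ GraverBasis (L (max m p) : Set ((Fin d → ℕ) × Fin c →₀ ℤ)) :=
      mem_graverBasis_of_subset (coe_subset_chainLimit (hp.trans (le_max_right _ _)))
        (hmono (le_max_left _ _) hwm) hw
    rw [← hstab _ (le_max_right _ _)] at hwN
    obtain ⟨σ, hσ, b, hb, rfl⟩ := hwN
    exact ⟨σ, hσ.isFinPerm, b, hb, rfl⟩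

theorem coe_eq_chainLimit_inter_suppIn (hsupp : ∀ n, ∀ u ∈ L n, SuppIn d c n u)
    (hmono : Monotone L) (hinv : ∀ n σ, InSymN n σ → ∀ u ∈ L n, permActd d c σ u ∈ L n)
    {r n : ℕ} (hr : 1 ≤ r) {B : Set ((Fin d → ℕ) × Fin c →₀ ℤ)} (hBr : B ⊆ L r)
    (hB : GraverBasis (chainLimit L) ⊆ symOrbitd d c B) (hrn : r ≤ n) :
    (L n : Set ((Fin d → ℕ) × Fin c →₀ ℤ)) = chainLimit L ∩ {u | SuppIn d c n u} :=
  Set.Subset.antisymm (fun u hu => ⟨coe_subset_chainLimit (hr.trans hrn) hu, hsupp n u hu⟩)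
    fun _ hu => mem_of_mem_chainLimit_of_suppIn hsupp hmono hinv hBr hB hrn hu.1 hu.2

theorem card_support_le_sup_of_mem_symOrbitd {B : Finset ((Fin d → ℕ) × Fin c →₀ ℤ)}
    {u : (Fin d → ℕ) × Fin c →₀ ℤ} (hu : u ∈ symOrbitd d c ↑B) :
    #u.support ≤ B.sup fun b => #b.support := by
  obtain ⟨σ, -, b, hb, rfl⟩ := hu
  rw [card_support_permActd]
  exact le_sup (f := fun b => #b.support) hb

theorem exists_symOrbitNd_eq_graverBasis
    (hmono : Monotone L) (hinv : ∀ n σ, InSymN n σ → ∀ u ∈ L n, permActd d c σ u ∈ L n)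
    {q q' : ℕ} (hq : 1 ≤ q)
    (hsat : ∀ n, q ≤ n →
      (L n : Set ((Fin d → ℕ) × Fin c →₀ ℤ)) = chainLimit L ∩ {u | SuppIn d c n u})
    (hbound : ∀ n, q ≤ n →
      ∀ u ∈ GraverBasis (L n : Set ((Fin d → ℕ) × Fin c →₀ ℤ)), #u.support ≤ q') :
    ∃ p, 1 ≤ p ∧ ∃ Bp : Set ((Fin d → ℕ) × Fin c →₀ ℤ),
      Bp ⊆ (L p : Set ((Fin d → ℕ) × Fin c →₀ ℤ)) ∧ ∀ n, p ≤ n →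
        symOrbitNd d c n Bp = GraverBasis (L n : Set ((Fin d → ℕ) × Fin c →₀ ℤ)) := by
  set p := max q (q' * d)
  refine ⟨p, hq.trans (le_max_left _ _), GraverBasis (chainLimit L) ∩ {u | SuppIn d c p u},
    (hsat p (le_max_left _ _)).symm ▸ Set.inter_subset_inter_left _ fun _ hu => hu.1,
    fun n hn => ?_⟩
  have hqn : q ≤ n := (le_max_left _ _).trans hn
  have hGn := graverBasis_eq_inter_of_saturated (hsat n hqn)
  rw [hGn]
  ext w
  constructor
  · rintro ⟨σ, hσ, b, ⟨hbG, hbp⟩, rfl⟩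
    exact ⟨permActd_mem_graverBasis_chainLimit hmono hinv hσ hbG, (hbp.mono hn).permActd hσ⟩
  · rintro ⟨hwG, hwn⟩
    have hcard : #w.support * d ≤ q' * d :=
      Nat.mul_le_mul_right d (hbound n hqn w (hGn ▸ ⟨hwG, hwn⟩))
    obtain ⟨σ, hσ, hσw⟩ := exists_inSymN_suppIn_of_card_le hwn hcard ((le_max_right _ _).trans hn)
    exact ⟨σ.symm, hσ.symm, permActd d c σ w,
      ⟨permActd_mem_graverBasis_chainLimit hmono hinv hσ hwG, hσw.mono (le_max_right _ _)⟩,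
      (permActd_symm_permActd σ w).symm⟩

end Stabilization

theorem chain_graver_stabilization_tfae_general (d c : ℕ)
    (L : ℕ → AddSubgroup ((Fin d → ℕ) × Fin c →₀ ℤ))
    (hsupp : ∀ n, ∀ u ∈ L n, SuppIn d c n u)
    (hmono : ∀ m n, m ≤ n → L m ≤ L n)
    (hinv : ∀ n σ, InSymN n σ → ∀ u ∈ L n, permActd d c σ u ∈ L n) :
    List.TFAE
      [ ∃ p, 1 ≤ p ∧ ∃ Bp : Set ((Fin d → ℕ) × Fin c →₀ ℤ),
          Bp ⊆ (↑(L p) : Set ((Fin d → ℕ) × Fin c →₀ ℤ)) ∧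
          ∀ n, p ≤ n →
            symOrbitNd d c n Bp = GraverBasis (↑(L n) : Set ((Fin d → ℕ) × Fin c →₀ ℤ)),
        ∃ q q', 1 ≤ q ∧ 1 ≤ q' ∧ ∀ n, q ≤ n →
          ((↑(L n) : Set ((Fin d → ℕ) × Fin c →₀ ℤ))
              = {u | (∃ m, 1 ≤ m ∧ u ∈ L m) ∧ SuppIn d c n u} ∧
            ∀ u ∈ GraverBasis (↑(L n) : Set ((Fin d → ℕ) × Fin c →₀ ℤ)),
              u.support.card ≤ q'),
        ∃ B : Finset ((Fin d → ℕ) × Fin c →₀ ℤ),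
          (↑B : Set ((Fin d → ℕ) × Fin c →₀ ℤ)) ⊆ {u | ∃ m, 1 ≤ m ∧ u ∈ L m} ∧
          symOrbitd d c ↑B = GraverBasis {u | ∃ m, 1 ≤ m ∧ u ∈ L m} ] := by
  have hLmono : Monotone L := fun m n h => hmono m n h
  tfae_have 1 → 3 := fun ⟨_, hp, _, _, hstab⟩ =>
    exists_finset_symOrbitd_eq_graverBasis hsupp hLmono hinv hp hstab
  tfae_have 3 → 2 := by
    rintro ⟨B, hBL, hB⟩
    obtain ⟨r, hr, hBr⟩ := exists_subset_of_finset_subset_chainLimit hLmono B hBL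
    have hsat n (hn : r ≤ n) := coe_eq_chainLimit_inter_suppIn hsupp hLmono hinv hr hBr hB.ge hn
    refine ⟨r, max 1 (B.sup fun b => #b.support), hr, le_max_left _ _,
      fun n hn => ⟨hsat n hn, fun u hu => ?_⟩⟩
    rw [graverBasis_eq_inter_of_saturated (hsat n hn)] at hu
    exact (card_support_le_sup_of_mem_symOrbitd (hB.ge hu.1)).trans (le_max_right _ _)
  tfae_have 2 → 1 := fun ⟨_, _, hq, _, h⟩ =>
    exists_symOrbitNd_eq_graverBasis hLmono hinv hq (fun n hn => (h n hn).1) fun n hn => (h n hn).2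
  tfae_finish

/-- For a `Sym`-invariant chain of lattices `(L n)_{n ≥ 1}` with limit
`L = ⋃_{n ≥ 1} L n`, the following are equivalent: (i) the chain Graver-stabilizes;
(ii) eventually `L_n = L ∩ ℤ^{(I_n)}` and the Graver basis of `L_n` has bounded support
size; (iii) `L` has a finite equivariant Graver basis. -/
theorem chain_graver_stabilization_tfae (d c : ℕ) (hd : 0 < d) (hc : 0 < c)
    (L : ℕ → AddSubgroup ((Fin d → ℕ) × Fin c →₀ ℤ))
    (hsupp : ∀ n, ∀ u ∈ L n, SuppIn d c n u)
    (hmono : ∀ m n, m ≤ n → L m ≤ L n)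
    (hinv : ∀ n σ, InSymN n σ → ∀ u ∈ L n, permActd d c σ u ∈ L n) :
    List.TFAE
      [ ∃ p, 1 ≤ p ∧ ∃ Bp : Set ((Fin d → ℕ) × Fin c →₀ ℤ),
          Bp ⊆ (↑(L p) : Set ((Fin d → ℕ) × Fin c →₀ ℤ)) ∧
          ∀ n, p ≤ n →
            symOrbitNd d c n Bp = GraverBasis (↑(L n) : Set ((Fin d → ℕ) × Fin c →₀ ℤ)),
        ∃ q q', 1 ≤ q ∧ 1 ≤ q' ∧ ∀ n, q ≤ n →
          ((↑(L n) : Set ((Fin d → ℕ) × Fin c →₀ ℤ))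
              = {u | (∃ m, 1 ≤ m ∧ u ∈ L m) ∧ SuppIn d c n u} ∧
            ∀ u ∈ GraverBasis (↑(L n) : Set ((Fin d → ℕ) × Fin c →₀ ℤ)),
              u.support.card ≤ q'),
        ∃ B : Finset ((Fin d → ℕ) × Fin c →₀ ℤ),
          (↑B : Set ((Fin d → ℕ) × Fin c →₀ ℤ)) ⊆ {u | ∃ m, 1 ≤ m ∧ u ∈ L m} ∧
          symOrbitd d c ↑B = GraverBasis {u | ∃ m, 1 ≤ m ∧ u ∈ L m} ] :=
  chain_graver_stabilization_tfae_general d c L hsupp hmono hinv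
end
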